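/- arXiv:2605.29660 — 7 statements merged into one kernel-verified Lean document; each statement's English description precedes it below -/
import Mathlib

section
/- For every λ ≥ 0, every A ⊆ ℕ and every natural number n ≥ 1, the Stein–Chen function satisfies g(n,λ,A) = (n−1)!·(λ⁻¹)^n·e^{λ}·F(n−1,λ,A) + (1/n)·1_{λ=0}·(Po(A;λ) − 1_A(n)), where F(m,λ,A) := Po(A ∩ {0,…,m}; λ) − Po(A;λ)·Po({0,…,m}; λ). -/
open scoped BigOperators

/-- Poisson pmf: Po(k;lam) = lam^k * e^(-lam) / k!  (with the convention 0^0 = 1). -/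
noncomputable def Po (k : ℕ) (lam : ℝ) : ℝ := lam ^ k * Real.exp (-lam) / (Nat.factorial k)

/-- Poisson measure of a set A of naturals: Po(A;lam) = sum over k in A of Po(k;lam). -/
noncomputable def PoSet (A : Set ℕ) (lam : ℝ) : ℝ := ∑' k : A, Po k lam

/-- The scalar Stein-Chen solution g(j,lam,A), defined recursively by g(0,lam,A) = 0 and
g(j,lam,A) = lam⁻¹ * ((j-1)*g(j-1,lam,A) + 1_A(j-1) - Po(A;lam))
             + (1/j) * 1_{lam=0} * (1_A(0) - 1_A(j)) for j ≥ 1,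
with the convention 0⁻¹ = 0. -/
noncomputable def steinChen : ℕ → ℝ → Set ℕ → ℝ
  | 0, _, _ => 0
  | (j + 1), lam, A =>
      lam⁻¹ * ((j : ℝ) * steinChen j lam A
          + A.indicator (fun _ => (1 : ℝ)) j - PoSet A lam)
        + (1 / ((j : ℝ) + 1)) * (if lam = 0 then (1 : ℝ) else 0)
          * (A.indicator (fun _ => (1 : ℝ)) 0 - A.indicator (fun _ => (1 : ℝ)) (j + 1))

/-! For `λ ≠ 0` the identity `Po(k;λ) · k! · λ⁻ᵏ · e^λ = 1` turns the recursion for `g` into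
`λⁿ e^{-λ} g(n+1) / n! = Σ_{k ≤ n} Po(k;λ) (1_A(k) − Po(A;λ))`, and this partial sum is exactly
`F(n,λ,A)`. For `λ = 0` only the correction term survives, and `Po(A;0) = 1_A(0)`. -/

open Finset

/-- The paper's `F(m, λ, A)`: the covariance of `1_A(X)` and `1_{X ≤ m}` for `X ~ Po(λ)`. -/
noncomputable def poCovIic (A : Set ℕ) (lam : ℝ) (m : ℕ) : ℝ :=
  PoSet (A ∩ Set.Iic m) lam - PoSet A lam * PoSet (Set.Iic m) lam

lemma PoSet_inter_Iic (A : Set ℕ) (lam : ℝ) (m : ℕ) :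
    PoSet (A ∩ Set.Iic m) lam =
      ∑ k ∈ range (m + 1), A.indicator (fun _ => (1 : ℝ)) k * Po k lam := by
  rw [PoSet, tsum_subtype (A ∩ Set.Iic m) (fun k => Po k lam), tsum_eq_sum (s := range (m + 1))]
  · refine sum_congr rfl fun k hk => ?_
    have hkm : k ≤ m := Nat.lt_succ_iff.mp (mem_range.mp hk)
    by_cases hA : k ∈ A <;> simp [hA, hkm]
  · intro k hk
    have hkm : ¬k ≤ m := fun h => hk (mem_range.mpr (Nat.lt_succ_of_le h))
    simp [hkm]

lemma PoSet_Iic (lam : ℝ) (m : ℕ) :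
    PoSet (Set.Iic m) lam = ∑ k ∈ range (m + 1), Po k lam := by
  simpa using PoSet_inter_Iic Set.univ lam m

lemma PoSet_zero (A : Set ℕ) : PoSet A 0 = A.indicator (fun _ => (1 : ℝ)) 0 := by
  rw [PoSet, tsum_subtype A (fun k => Po k 0), tsum_eq_single 0]
  · by_cases hA : 0 ∈ A <;> simp [hA, Po]
  · intro k hk
    simp [Po, zero_pow hk]

lemma poCovIic_eq_sum (A : Set ℕ) (lam : ℝ) (m : ℕ) :
    poCovIic A lam m =
      ∑ k ∈ range (m + 1), Po k lam * (A.indicator (fun _ => (1 : ℝ)) k - PoSet A lam) := by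
  simp only [poCovIic, PoSet_inter_Iic, PoSet_Iic, mul_sub, sum_sub_distrib, mul_sum]
  congr 1 <;> exact sum_congr rfl fun _ _ => by ring

lemma poCovIic_succ (A : Set ℕ) (lam : ℝ) (m : ℕ) :
    poCovIic A lam (m + 1) =
      poCovIic A lam m +
        Po (m + 1) lam * (A.indicator (fun _ => (1 : ℝ)) (m + 1) - PoSet A lam) := by
  rw [poCovIic_eq_sum, sum_range_succ, ← poCovIic_eq_sum]

lemma Po_mul_factorial_mul_inv_pow_mul_exp {lam : ℝ} (hlam : lam ≠ 0) (k : ℕ) :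
    Po k lam * k.factorial * lam⁻¹ ^ k * Real.exp lam = 1 := by
  have hfac : (k.factorial : ℝ) ≠ 0 := by exact_mod_cast k.factorial_ne_zero
  rw [Po, Real.exp_neg, inv_pow]
  field_simp

lemma steinChen_succ_of_ne_zero {lam : ℝ} (hlam : lam ≠ 0) (A : Set ℕ) (n : ℕ) :
    steinChen (n + 1) lam A =
      n.factorial * lam⁻¹ ^ (n + 1) * Real.exp lam * poCovIic A lam n := by
  induction n with
  | zero =>
    have hPo := Po_mul_factorial_mul_inv_pow_mul_exp hlam 0
    rw [steinChen, steinChen, if_neg hlam, poCovIic_eq_sum, sum_range_one]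
    simp only [Nat.factorial_zero, Nat.cast_one, pow_zero, mul_one] at hPo
    push_cast
    linear_combination -lam⁻¹ * (A.indicator (fun _ => (1 : ℝ)) 0 - PoSet A lam) * hPo
  | succ n ih =>
    have hPo := Po_mul_factorial_mul_inv_pow_mul_exp hlam (n + 1)
    rw [steinChen, ih, if_neg hlam, poCovIic_succ]
    push_cast [Nat.factorial_succ] at hPo ⊢
    linear_combination -lam⁻¹ * (A.indicator (fun _ => (1 : ℝ)) (n + 1) - PoSet A lam) * hPo

lemma steinChen_succ_zero (A : Set ℕ) (n : ℕ) :
    steinChen (n + 1) 0 A =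
      1 / ((n : ℝ) + 1) *
        (A.indicator (fun _ => (1 : ℝ)) 0 - A.indicator (fun _ => (1 : ℝ)) (n + 1)) := by
  simp [steinChen]

theorem steinChen_explicit_formula_general (lam : ℝ) (A : Set ℕ)
    (n : ℕ) (hn : 1 ≤ n) :
    steinChen n lam A =
      ((n - 1).factorial : ℝ) * (lam⁻¹) ^ n * Real.exp lam *
        (PoSet (A ∩ Set.Iic (n - 1)) lam - PoSet A lam * PoSet (Set.Iic (n - 1)) lam)
      + (1 / (n : ℝ)) * (if lam = 0 then (1 : ℝ) else 0) *
          (PoSet A lam - A.indicator (fun _ => (1 : ℝ)) n) := by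
  obtain ⟨m, rfl⟩ : ∃ m, n = m + 1 := ⟨n - 1, (Nat.succ_pred_eq_of_pos hn).symm⟩
  rw [Nat.add_sub_cancel]
  by_cases hlam : lam = 0
  · subst hlam
    rw [steinChen_succ_zero, if_pos rfl, inv_zero, zero_pow m.succ_ne_zero]
    simp only [PoSet_zero]
    push_cast
    ring
  · rw [steinChen_succ_of_ne_zero hlam, poCovIic, if_neg hlam]
    ring

/-- Explicit formula for the Stein-Chen solution: for lam ≥ 0, A ⊆ ℕ and n ≥ 1,
g(n,lam,A) = (n-1)! * (lam⁻¹)^n * e^lam * F(n-1,lam,A)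
             + (1/n) * 1_{lam=0} * (Po(A;lam) - 1_A(n)),
where F(m,lam,A) = Po(A ∩ {0,...,m};lam) - Po(A;lam) * Po({0,...,m};lam). -/
theorem steinChen_explicit_formula (lam : ℝ) (hlam : 0 ≤ lam) (A : Set ℕ)
    (n : ℕ) (hn : 1 ≤ n) :
    steinChen n lam A =
      ((n - 1).factorial : ℝ) * (lam⁻¹) ^ n * Real.exp lam *
        (PoSet (A ∩ Set.Iic (n - 1)) lam - PoSet A lam * PoSet (Set.Iic (n - 1)) lam)
      + (1 / (n : ℝ)) * (if lam = 0 then (1 : ℝ) else 0) *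
          (PoSet A lam - A.indicator (fun _ => (1 : ℝ)) n) :=
  steinChen_explicit_formula_general lam A n hn
end

section
/- For every natural number n and every λ ≥ 0, the set function A ↦ g(n,λ,A) on the power set of ℕ is countably additive with total mass zero: g(n,λ,∅) = 0; for every sequence (A_k)_{k∈ℕ} of pairwise disjoint subsets of ℕ the family (g(n,λ,A_k))_{k∈ℕ} is summable and Σ_{k} g(n,λ,A_k) = g(n,λ,⋃_k A_k); and g(n,λ,ℕ) = 0. -/
open scoped BigOperators

/-!
The recursion defining `g(n, λ, A)` is linear in the data `1_A(i)` and `Po(A; λ)`, and each of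
these is the sum over `m ∈ A` of its value at `A = {m}`. By induction on `n`, `g(n, λ, A)` is
therefore the sum over `m ∈ A` of the point masses `g(n, λ, {m})`, and a set function given by
an unconditionally summable density is countably additive. Its total mass vanishes because
`1_ℕ ≡ 1 = Po(ℕ; λ)` kills every term of the recursion.
-/

theorem HasSum.iUnion {α β ι : Type*} [AddCommMonoid α] [TopologicalSpace α] [ContinuousAdd α]
    [RegularSpace α] {f : β → α} {A : ι → Set β} (hA : Pairwise (Function.onFun Disjoint A))
    {a : α} {b : ι → α} (hU : HasSum (fun x : ⋃ k, A k => f x) a)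
    (hb : ∀ k, HasSum (fun x : A k => f x) (b k)) : HasSum b a :=
  ((Set.unionEqSigmaOfDisjoint hA).symm.hasSum_iff.mpr hU).sigma hb

theorem hasSum_indicator_singleton {M β : Type*} [AddCommMonoid M] [TopologicalSpace M]
    (A : Set β) (i : β) (c : M) :
    HasSum (fun m : A => ({(m : β)} : Set β).indicator (fun _ => c) i)
      (A.indicator (fun _ => c) i) := by
  classical
  by_cases hi : i ∈ A
  · rw [Set.indicator_of_mem hi]
    convert hasSum_ite_eq (⟨i, hi⟩ : A) c with m
    simp [Set.indicator_apply, Subtype.ext_iff, eq_comm]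
  · rw [Set.indicator_of_notMem hi]
    convert hasSum_zero with m
    exact Set.indicator_of_notMem (by rintro rfl; exact hi m.2) _

theorem hasSum_Po (lam : ℝ) : HasSum (fun k => Po k lam) 1 := by
  have h := (NormedSpace.expSeries_div_hasSum_exp lam).mul_right (Real.exp (-lam))
  rw [← Real.exp_eq_exp_ℝ, ← Real.exp_add, add_neg_cancel, Real.exp_zero] at h
  exact h.congr_fun fun k => by rw [Po, div_mul_eq_mul_div, mul_div_right_comm]

theorem hasSum_PoSet_singleton (A : Set ℕ) (lam : ℝ) :
    HasSum (fun m : A => PoSet {(m : ℕ)} lam) (PoSet A lam) := by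
  simp only [PoSet, tsum_singleton (f := fun k => Po k lam)]
  exact ((hasSum_Po lam).summable.subtype A).hasSum

theorem PoSet_univ (lam : ℝ) : PoSet Set.univ lam = 1 := by
  rw [PoSet, tsum_univ (fun k => Po k lam)]
  exact (hasSum_Po lam).tsum_eq

theorem hasSum_steinChen_singleton (n : ℕ) (lam : ℝ) (A : Set ℕ) :
    HasSum (fun m : A => steinChen n lam {(m : ℕ)}) (steinChen n lam A) := by
  induction n with
  | zero => exact hasSum_zero
  | succ j ih =>
    have hmain := (((ih.mul_left (j : ℝ)).add (hasSum_indicator_singleton A j 1)).sub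
      (hasSum_PoSet_singleton A lam)).mul_left lam⁻¹
    have hlamZero := ((hasSum_indicator_singleton A 0 1).sub
      (hasSum_indicator_singleton A (j + 1) 1)).mul_left
        ((1 / ((j : ℝ) + 1)) * (if lam = 0 then (1 : ℝ) else 0))
    exact hmain.add hlamZero

theorem steinChen_univ (n : ℕ) (lam : ℝ) : steinChen n lam Set.univ = 0 := by
  induction n with
  | zero => rfl
  | succ j ih => simp [steinChen, ih, PoSet_univ]

theorem steinChen_countably_additive_general (n : ℕ) (lam : ℝ) :
    steinChen n lam (∅ : Set ℕ) = 0 ∧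
    (∀ A : ℕ → Set ℕ, Pairwise (Function.onFun Disjoint A) →
      HasSum (fun k => steinChen n lam (A k)) (steinChen n lam (⋃ k, A k))) ∧
    steinChen n lam (Set.univ : Set ℕ) = 0 :=
  ⟨(hasSum_steinChen_singleton n lam ∅).unique hasSum_empty,
    fun A hA => HasSum.iUnion (f := fun m => steinChen n lam {m}) hA
      (hasSum_steinChen_singleton n lam _) fun k => hasSum_steinChen_singleton n lam (A k),
    steinChen_univ n lam⟩

/-- For each n and lam ≥ 0, the set function A ↦ g(n,lam,A) on the power set of ℕ is
countably additive with total mass zero. -/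
theorem steinChen_countably_additive (n : ℕ) (lam : ℝ) (hlam : 0 ≤ lam) :
    steinChen n lam (∅ : Set ℕ) = 0 ∧
    (∀ A : ℕ → Set ℕ, Pairwise (Function.onFun Disjoint A) →
      HasSum (fun k => steinChen n lam (A k)) (steinChen n lam (⋃ k, A k))) ∧
    steinChen n lam (Set.univ : Set ℕ) = 0 :=
  steinChen_countably_additive_general n lam
end

section
/- Fix λ ≥ 0 and a natural number i ≥ 1. Then λ·g(j,λ,{i}) ≤ 0 for all natural numbers j with 1 ≤ j ≤ i; the map j ↦ λ·g(j,λ,{i}) is decreasing on {1,…,i}, i.e. λ·g(j,λ,{i}) ≤ λ·g(j−1,λ,{i}) for all 2 ≤ j ≤ i; and λ·g(i,λ,{i}) = −(λ/i)·Po({0,…,i−1};λ). -/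
/-!
For `λ > 0` and `j < i` the recursion for `g(·, λ, {i})` reads `λ g(j+1) = j g(j) - Po(i; λ)`,
whose solution is `g(j+1) = -(λ^(i-j-1) j! / i!) Po({0,…,j}; λ)`. Nonpositivity is then
immediate, and monotonicity reduces to `λ Po({0,…,n-1}; λ) ≤ n Po({0,…,n}; λ)`, which holds
termwise because `λ Po(k; λ) = (k+1) Po(k+1; λ)`. For `λ = 0` every claim is `0 ≤ 0` or `0 = 0`.
-/

open scoped BigOperators

open Finset Nat

/-- `Po({0,…,n-1}; λ)`. -/
noncomputable def poBelow (n : ℕ) (lam : ℝ) : ℝ := ∑ k ∈ range n, Po k lam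

lemma po_nonneg {lam : ℝ} (hlam : 0 ≤ lam) (k : ℕ) : 0 ≤ Po k lam := by
  unfold Po; positivity

lemma factorial_mul_po (k : ℕ) (lam : ℝ) : (k ! : ℝ) * Po k lam = lam ^ k * Real.exp (-lam) := by
  unfold Po; field_simp

lemma pow_sub_mul_factorial_mul_po {k i : ℕ} (hki : k ≤ i) (lam : ℝ) :
    lam ^ (i - k) * ((k ! : ℝ) * Po k lam) = (i ! : ℝ) * Po i lam := by
  rw [factorial_mul_po, factorial_mul_po, ← mul_assoc, ← pow_add, Nat.sub_add_cancel hki]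

lemma succ_mul_po_succ (k : ℕ) (lam : ℝ) : ((k : ℝ) + 1) * Po (k + 1) lam = lam * Po k lam := by
  unfold Po; rw [Nat.factorial_succ]; push_cast; field_simp; ring

lemma poSet_singleton (i : ℕ) (lam : ℝ) : PoSet {i} lam = Po i lam := by
  simp [PoSet]

lemma poSet_Iic (n : ℕ) (lam : ℝ) : PoSet (Set.Iic n) lam = poBelow (n + 1) lam := by
  have h : (Set.Iic n : Set ℕ) = ↑(range (n + 1)) := by ext k; simp
  rw [PoSet, h, poBelow]
  exact Finset.tsum_subtype' (range (n + 1)) (fun k => Po k lam)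

lemma poBelow_succ (n : ℕ) (lam : ℝ) : poBelow (n + 1) lam = poBelow n lam + Po n lam :=
  sum_range_succ _ _

lemma poBelow_nonneg {lam : ℝ} (hlam : 0 ≤ lam) (n : ℕ) : 0 ≤ poBelow n lam :=
  sum_nonneg fun k _ => po_nonneg hlam k

lemma mul_poBelow_le {lam : ℝ} (hlam : 0 ≤ lam) (n : ℕ) : lam * poBelow n lam ≤ n * poBelow (n + 1) lam :=
  calc lam * poBelow n lam = ∑ k ∈ range n, ((k : ℝ) + 1) * Po (k + 1) lam := by
        rw [poBelow, mul_sum]; simp only [succ_mul_po_succ]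
    _ ≤ ∑ k ∈ range n, (n : ℝ) * Po (k + 1) lam := by
        refine sum_le_sum fun k hk => mul_le_mul_of_nonneg_right ?_ (po_nonneg hlam _)
        exact_mod_cast mem_range.mp hk
    _ = n * ∑ k ∈ range n, Po (k + 1) lam := (mul_sum _ _ _).symm
    _ ≤ n * poBelow (n + 1) lam := by
        rw [poBelow, sum_range_succ']
        gcongr
        exact le_add_of_nonneg_right (po_nonneg hlam 0)

section Singleton

variable {lam : ℝ} {i : ℕ}

lemma steinChen_singleton_succ (hlam : lam ≠ 0) {j : ℕ} (hji : j ≠ i) :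
    steinChen (j + 1) lam {i} = lam⁻¹ * (j * steinChen j lam {i} - Po i lam) := by
  have hind : ({i} : Set ℕ).indicator (fun _ => (1 : ℝ)) j = 0 :=
    Set.indicator_of_notMem (by simpa using hji) _
  simp only [steinChen, hind, poSet_singleton, hlam, if_false]
  ring

lemma steinChen_singleton_eq (hlam : lam ≠ 0) {j : ℕ} (hji : j < i) :
    steinChen (j + 1) lam {i} = -(lam ^ (i - (j + 1)) * j ! / i !) * poBelow (j + 1) lam := by
  have po_eq {k : ℕ} (hki : k ≤ i) : Po i lam = lam ^ (i - k) * (k ! * Po k lam) / i ! := by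
    rw [pow_sub_mul_factorial_mul_po hki]; field_simp
  induction j with
  | zero =>
    rw [steinChen_singleton_succ hlam hji.ne, po_eq (Nat.zero_le i), steinChen, poBelow_succ,
      poBelow, sum_range_zero, show i - 0 = i - 1 + 1 by omega, pow_succ]
    field_simp
    ring
  | succ j ih =>
    rw [steinChen_singleton_succ hlam hji.ne, ih (by omega), po_eq hji.le, poBelow_succ (j + 1),
      show i - (j + 1) = i - (j + 2) + 1 by omega, pow_succ, Nat.factorial_succ]
    push_cast
    field_simp
    ring

lemma steinChen_singleton_nonpos (hlam : 0 < lam) {j : ℕ} (hji : j ≤ i) :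
    steinChen j lam {i} ≤ 0 := by
  cases j with
  | zero => rfl
  | succ j =>
    rw [steinChen_singleton_eq hlam.ne' hji]
    have hc : 0 ≤ lam ^ (i - (j + 1)) * j ! / i ! := by positivity
    exact mul_nonpos_of_nonpos_of_nonneg (neg_nonpos.mpr hc) (poBelow_nonneg hlam.le _)

lemma steinChen_singleton_succ_le (hlam : 0 < lam) {j : ℕ} (hji : j < i) :
    steinChen (j + 1) lam {i} ≤ steinChen j lam {i} := by
  cases j with
  | zero => exact steinChen_singleton_nonpos hlam hji
  | succ j =>
    rw [steinChen_singleton_eq hlam.ne' hji, steinChen_singleton_eq hlam.ne' (by omega : j < i)]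
    have hc : 0 ≤ lam ^ (i - (j + 2)) * j ! / i ! := by positivity
    calc -(lam ^ (i - (j + 2)) * (j + 1)! / i !) * poBelow (j + 2) lam
        = -(lam ^ (i - (j + 2)) * j ! / i ! * ((j + 1 : ℕ) * poBelow (j + 1 + 1) lam)) := by
          rw [Nat.factorial_succ]; push_cast; ring
      _ ≤ -(lam ^ (i - (j + 2)) * j ! / i ! * (lam * poBelow (j + 1) lam)) :=
          neg_le_neg (mul_le_mul_of_nonneg_left (mul_poBelow_le hlam.le _) hc)
      _ = -(lam ^ (i - (j + 1)) * j ! / i !) * poBelow (j + 1) lam := by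
          rw [show i - (j + 1) = i - (j + 2) + 1 by omega, pow_succ]; ring

end Singleton

/-- For lam ≥ 0 and i ≥ 1: lam * g(j,lam,{i}) ≤ 0 for 1 ≤ j ≤ i, the map
j ↦ lam * g(j,lam,{i}) is decreasing on {1,...,i}, and
lam * g(i,lam,{i}) = -(lam/i) * Po({0,...,i-1};lam). -/
theorem steinChen_singleton_le (lam : ℝ) (hlam : 0 ≤ lam) (i : ℕ) (hi : 1 ≤ i) :
    (∀ j : ℕ, 1 ≤ j → j ≤ i → lam * steinChen j lam {i} ≤ 0) ∧
    (∀ j : ℕ, 2 ≤ j → j ≤ i →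
      lam * steinChen j lam {i} ≤ lam * steinChen (j - 1) lam {i}) ∧
    lam * steinChen i lam {i} = -(lam / (i : ℝ)) * PoSet (Set.Iic (i - 1)) lam := by
  rcases hlam.eq_or_lt with rfl | hpos
  · simp
  obtain ⟨n, rfl⟩ : ∃ n, i = n + 1 := ⟨i - 1, by omega⟩
  refine ⟨fun j _ hji => mul_nonpos_of_nonneg_of_nonpos hlam (steinChen_singleton_nonpos hpos hji),
    fun j hj hji => ?_, ?_⟩
  · obtain ⟨m, rfl⟩ : ∃ m, j = m + 1 := ⟨j - 1, by omega⟩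
    exact mul_le_mul_of_nonneg_left (steinChen_singleton_succ_le hpos hji) hlam
  · rw [steinChen_singleton_eq hpos.ne' (Nat.lt_succ_self n), Nat.add_sub_cancel, poSet_Iic,
      Nat.sub_self, pow_zero, Nat.factorial_succ]
    push_cast
    field_simp
end

section
/- For every λ ≥ 0 and every natural number j ≥ 1: λ·(g(j+1,λ,{j}) − g(j,λ,{j})) = e^{−λ}·( Σ_{k=j+1}^{∞} λ^k/k! + (1/j)·Σ_{k=0}^{j−1} λ^{k+1}/k! ), and this quantity is at most 1 − e^{−λ}. -/
open scoped BigOperators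

/-
For `λ > 0` the recursion `λ g(j+1) = j g(j) + 1_A(j) − Po(A;λ)` telescopes after
multiplying by `λ^j / j!`, giving the classical closed form
`λ^(j+1)/j! · g(j+1) = Σ_{k ≤ j} λ^k/k! · (1_A(k) − Po(A;λ))`.
For `A = {j}` this yields `λ g(j+1) = 1 − e^{−λ} Σ_{k ≤ j} λ^k/k!` and
`λ g(j) = −e^{−λ}/j · Σ_{k < j} λ^(k+1)/k!`, and the identity follows by splitting
`1 = e^{−λ} e^λ` into the partial exponential sum and its tail. The bound compares the second
sum termwise with `Σ_{k < j} λ^(k+1)/(k+1)!`, using `1/j ≤ 1/(k+1)` for `k < j`.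
At `λ = 0` all quantities multiplied by `λ` vanish.
-/

open Finset
open scoped Nat

lemma mul_steinChen_succ {lam : ℝ} (hlam : lam ≠ 0) (A : Set ℕ) (j : ℕ) :
    lam * steinChen (j + 1) lam A =
      j * steinChen j lam A + A.indicator (fun _ => (1 : ℝ)) j - PoSet A lam := by
  rw [steinChen, if_neg hlam, mul_zero, zero_mul, add_zero, mul_inv_cancel_left₀ hlam]

lemma pow_div_factorial_mul_steinChen_succ {lam : ℝ} (hlam : lam ≠ 0) (A : Set ℕ) (n : ℕ) :
    lam ^ (n + 1) / n ! * steinChen (n + 1) lam A =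
      ∑ k ∈ range (n + 1),
        lam ^ k / k ! * (A.indicator (fun _ => (1 : ℝ)) k - PoSet A lam) := by
  induction n with
  | zero => simp [pow_one, mul_steinChen_succ hlam]
  | succ n ih =>
    have hstep := mul_steinChen_succ hlam A (n + 1)
    rw [sum_range_succ, ← ih, ← sub_eq_iff_eq_add', pow_succ, Nat.factorial_succ]
    push_cast at hstep ⊢
    field_simp
    linear_combination hstep

lemma sum_mul_indicator_singleton_sub (f : ℕ → ℝ) (s : Finset ℕ) (m : ℕ) (c : ℝ) :
    ∑ k ∈ s, f k * (({m} : Set ℕ).indicator (fun _ => (1 : ℝ)) k - c) =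
      (if m ∈ s then f m else 0) - c * ∑ k ∈ s, f k := by
  simp [mul_sub, sum_sub_distrib, Set.indicator_apply, mul_sum, mul_comm]

lemma PoSet_singleton (j : ℕ) (lam : ℝ) : PoSet {j} lam = lam ^ j * Real.exp (-lam) / j ! := by
  rw [PoSet, tsum_eq_single (⟨j, rfl⟩ : ({j} : Set ℕ))]
  · rfl
  · rintro ⟨b, rfl⟩ hne
    exact absurd rfl hne

lemma mul_steinChen_singleton_self (lam : ℝ) (j : ℕ) :
    lam * steinChen j lam {j} =
      -(Real.exp (-lam) / j) * ∑ k ∈ range j, lam ^ (k + 1) / k ! := by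
  rcases eq_or_ne lam 0 with rfl | hlam
  · simp
  cases j with
  | zero => simp [steinChen]
  | succ n =>
    have h := pow_div_factorial_mul_steinChen_succ hlam {n + 1} n
    rw [sum_mul_indicator_singleton_sub, if_neg (by simp), PoSet_singleton,
      Nat.factorial_succ] at h
    have hshift : ∑ k ∈ range (n + 1), lam ^ (k + 1) / k ! =
        lam * ∑ k ∈ range (n + 1), lam ^ k / k ! := by
      rw [mul_sum]; exact sum_congr rfl fun k _ => by ring
    set S := ∑ k ∈ range (n + 1), lam ^ k / (k ! : ℝ)
    push_cast at h
    field_simp at h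
    have hg : steinChen (n + 1) lam {n + 1} * (n + 1) = -(Real.exp (-lam) * S) := by
      refine mul_left_cancel₀ (pow_ne_zero (n + 1) hlam) ?_
      linear_combination h
    rw [hshift]
    push_cast
    field_simp
    linear_combination hg

lemma mul_steinChen_succ_singleton_self (lam : ℝ) (j : ℕ) :
    lam * steinChen (j + 1) lam {j} =
      1 - Real.exp (-lam) * ∑ k ∈ range (j + 1), lam ^ k / k ! := by
  rcases eq_or_ne lam 0 with rfl | hlam
  · simp [sum_range_succ']
  have h := pow_div_factorial_mul_steinChen_succ hlam {j} j
  rw [sum_mul_indicator_singleton_sub, if_pos (self_mem_range_succ j), PoSet_singleton] at h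
  field_simp at h
  refine mul_left_cancel₀ (pow_ne_zero j hlam) ?_
  linear_combination h

lemma exp_eq_sum_range_add_tsum (x : ℝ) (n : ℕ) :
    Real.exp x = ∑ k ∈ range n, x ^ k / k ! + ∑' t : ℕ, x ^ (n + t) / (n + t) ! := by
  rw [Real.exp_eq_exp_ℝ, NormedSpace.exp_eq_tsum_div]
  dsimp only
  rw [← (Real.summable_pow_div_factorial x).sum_add_tsum_nat_add n]
  simp only [add_comm _ n]

lemma tsum_add_one_div_mul_sum_le_exp_sub_one {lam : ℝ} (hlam : 0 ≤ lam) (j : ℕ) :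
    ∑' t : ℕ, lam ^ (j + 1 + t) / (j + 1 + t) ! +
        1 / (j : ℝ) * ∑ k ∈ range j, lam ^ (k + 1) / k ! ≤ Real.exp lam - 1 := by
  have htermwise : ∀ k ∈ range j,
      1 / (j : ℝ) * (lam ^ (k + 1) / k !) ≤ lam ^ (k + 1) / (k + 1) ! := by
    intro k hk
    have hkj : (k : ℝ) + 1 ≤ j := by exact_mod_cast mem_range.mp hk
    calc 1 / (j : ℝ) * (lam ^ (k + 1) / k !)
        ≤ 1 / ((k : ℝ) + 1) * (lam ^ (k + 1) / k !) := by gcongr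
      _ = lam ^ (k + 1) / (k + 1) ! := by
          rw [Nat.factorial_succ]; push_cast; field_simp
  rw [exp_eq_sum_range_add_tsum lam (j + 1), sum_range_succ', mul_sum]
  simp only [pow_zero, Nat.factorial_zero, Nat.cast_one, div_one]
  linarith [sum_le_sum htermwise]

theorem steinChen_delta_diag_general (lam : ℝ) (hlam : 0 ≤ lam) (j : ℕ) :
    lam * (steinChen (j + 1) lam {j} - steinChen j lam {j}) =
      Real.exp (-lam) *
        ((∑' t : ℕ, lam ^ (j + 1 + t) / ((j + 1 + t).factorial : ℝ))
          + (1 / (j : ℝ)) * ∑ k ∈ Finset.range j, lam ^ (k + 1) / (k.factorial : ℝ)) ∧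
    lam * (steinChen (j + 1) lam {j} - steinChen j lam {j}) ≤ 1 - Real.exp (-lam) := by
  have hdiff : lam * (steinChen (j + 1) lam {j} - steinChen j lam {j}) =
      Real.exp (-lam) * ((∑' t : ℕ, lam ^ (j + 1 + t) / ((j + 1 + t).factorial : ℝ))
        + (1 / (j : ℝ)) * ∑ k ∈ Finset.range j, lam ^ (k + 1) / (k.factorial : ℝ)) := by
    have hone : Real.exp (-lam) * Real.exp lam = 1 := by rw [← Real.exp_add]; simp
    rw [mul_sub, mul_steinChen_singleton_self, mul_steinChen_succ_singleton_self]
    linear_combination Real.exp (-lam) * exp_eq_sum_range_add_tsum lam (j + 1) - hone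
  refine ⟨hdiff, hdiff ▸ ?_⟩
  calc _ ≤ Real.exp (-lam) * (Real.exp lam - 1) := by
        gcongr; exact tsum_add_one_div_mul_sum_le_exp_sub_one hlam j
    _ = 1 - Real.exp (-lam) := by rw [mul_sub, ← Real.exp_add]; simp

/-- For lam ≥ 0 and j ≥ 1:
lam * (g(j+1,lam,{j}) - g(j,lam,{j}))
  = e^(-lam) * ( sum_{k=j+1}^infty lam^k/k! + (1/j) * sum_{k=0}^{j-1} lam^(k+1)/k! ),
and this quantity is at most 1 - e^(-lam).  (The infinite series is indexed by
k = j+1+t, t ∈ ℕ.) -/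
theorem steinChen_delta_diag (lam : ℝ) (hlam : 0 ≤ lam) (j : ℕ) (hj : 1 ≤ j) :
    lam * (steinChen (j + 1) lam {j} - steinChen j lam {j}) =
      Real.exp (-lam) *
        ((∑' t : ℕ, lam ^ (j + 1 + t) / ((j + 1 + t).factorial : ℝ))
          + (1 / (j : ℝ)) * ∑ k ∈ Finset.range j, lam ^ (k + 1) / (k.factorial : ℝ)) ∧
    lam * (steinChen (j + 1) lam {j} - steinChen j lam {j}) ≤ 1 - Real.exp (-lam) :=
  steinChen_delta_diag_general lam hlam j
end

section
/- Let B_0,…,B_n ∈ 𝓕 be conditionally independent given 𝓖, set W := Σ_{j=0}^{n} 1_{B_j}, W_i := Σ_{j≠i} 1_{B_j}, and let H be a nonnegative version of E[W|𝓖]. Then for every A ⊆ ℕ, every k ∈ ℕ and every i ∈ {0,…,n}: E[ 1_{B_i}·g(W_i+k, H, A) | 𝓖 ] = ℙ[B_i|𝓖]·E[ g(W_i+k, H, A) | 𝓖 ] almost everywhere, and E[ 1_{B_i}·g(W+k, H, A) | 𝓖 ] = ℙ[B_i|𝓖]·E[ g(W_i+k+1, H, A) | 𝓖 ] almost everywhere,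 where g is evaluated pointwise in its first two arguments. -/
open scoped BigOperators

open MeasureTheory

/-!
Conditionally on `𝓖`, the count `W_i` is a function of the events `B_j`, `j ≠ i`, which are
conditionally independent of `B_i`, while `H` is a.e. `𝓖`-measurable. Splitting along the finitely
many values of `W_i`, `g(W_i + k, H, A) = ∑_m 1{W_i = m} g(m + k, H, A)`, and each summand is a
`𝓖`-measurable factor times an indicator; pulling the factor out of the conditional expectation and
using `ℙ[B_i ∩ {W_i = m} | 𝓖] = ℙ[B_i | 𝓖] ℙ[W_i = m | 𝓖]` gives the first identity. On `B_i` we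
have `W = W_i + 1`, which reduces the second identity to the first one with `k + 1`.
Integrability comes from the bound `|g(j, λ, A)| ≤ e^λ` for `λ ≥ 0`, read off the closed form
`g(j + 1, λ, A) = j! λ^{-(j+1)} ∑_{m ≤ j} (1_A(m) - Po(A;λ)) λ^m / m!`, together with
`0 ≤ H ≤ n + 1` a.e.
-/

open Finset MeasurableSpace
open scoped Nat

lemma hasSum_pow_div_factorial (x : ℝ) : HasSum (fun n => x ^ n / n !) (Real.exp x) := by
  rw [Real.exp_eq_exp_ℝ]
  exact NormedSpace.expSeries_div_hasSum_exp x

lemma poSet_eq_exp_mul_tsum (A : Set ℕ) (lam : ℝ) :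
    PoSet A lam = Real.exp (-lam) * ∑' k, A.indicator (fun m => lam ^ m / m !) k := by
  rw [PoSet, tsum_subtype A (fun k => Po k lam), ← tsum_mul_left]
  congr 1 with k
  by_cases hk : k ∈ A <;> simp [hk, Po]
  ring

lemma steinChen_succ_of_pos (A : Set ℕ) {lam : ℝ} (hlam : 0 < lam) (j : ℕ) :
    steinChen (j + 1) lam A = j ! / lam ^ (j + 1) *
      ∑ m ∈ range (j + 1),
        (A.indicator (fun _ => (1 : ℝ)) m - PoSet A lam) * (lam ^ m / m !) := by
  induction j with
  | zero => simp [steinChen, hlam.ne']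
  | succ j ih =>
    rw [steinChen, ih, sum_range_succ _ (j + 1)]
    simp only [hlam.ne', if_false, mul_zero, Nat.factorial_succ]
    push_cast
    field_simp
    ring

lemma tsum_pow_div_factorial_add_le {lam : ℝ} (hlam : 0 ≤ lam) (j : ℕ) :
    ∑' i, lam ^ (i + j) / (i + j) ! ≤ lam ^ j / j ! * Real.exp lam := by
  have hterm (i : ℕ) : lam ^ (i + j) / (i + j) ! ≤ lam ^ j / j ! * (lam ^ i / i !) := by
    have hfac : (i ! * j ! : ℝ) ≤ (i + j) ! := by
      exact_mod_cast Nat.le_of_dvd (Nat.factorial_pos _)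
        (Nat.factorial_mul_factorial_dvd_factorial_add i j)
    calc lam ^ (i + j) / (i + j) ! ≤ lam ^ (i + j) / (i ! * j !) := by gcongr
      _ = lam ^ j / j ! * (lam ^ i / i !) := by rw [pow_add]; field_simp
  have hsum := Real.summable_pow_div_factorial lam
  rw [← (hasSum_pow_div_factorial lam).tsum_eq, ← tsum_mul_left]
  exact ((summable_nat_add_iff j).mpr hsum).tsum_le_tsum hterm (hsum.mul_left _)

lemma abs_mul_sub_mul_le {a b c d : ℝ} (ha : 0 ≤ a) (hab : a ≤ b) (hc : 0 ≤ c) (hcd : c ≤ d) :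
    |a * d - c * b| ≤ b * d := by
  rw [abs_sub_le_iff]
  constructor <;> nlinarith

lemma abs_sum_indicator_sub_poSet_le (A : Set ℕ) {lam : ℝ} (hlam : 0 ≤ lam) (j : ℕ) :
    |∑ m ∈ range j, (A.indicator (fun _ => (1 : ℝ)) m - PoSet A lam) * (lam ^ m / m !)|
      ≤ lam ^ j / j ! * Real.exp lam := by
  set u : ℕ → ℝ := fun m => (lam ^ m / m !)
  have hu : Summable u := Real.summable_pow_div_factorial lam
  have hu0 (m : ℕ) : 0 ≤ u m := by positivity
  have hAu0 (m : ℕ) : 0 ≤ A.indicator u m := Set.indicator_nonneg (fun m _ => hu0 m) m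
  have hAu (m : ℕ) : A.indicator u m ≤ u m := Set.indicator_le_self' (fun m _ => hu0 m) m
  set S₁ := ∑ m ∈ range j, A.indicator u m
  set S₂ := ∑ m ∈ range j, u m
  set T₁ := ∑' i, A.indicator u (i + j)
  set T₂ := ∑' i, u (i + j)
  have hT₁T₂ : T₁ ≤ T₂ := ((summable_nat_add_iff j).mpr (hu.indicator A)).tsum_le_tsum
    (fun i => hAu _) ((summable_nat_add_iff j).mpr hu)
  have hexp : Real.exp (-lam) * (S₂ + T₂) = 1 := by
    rw [hu.sum_add_tsum_nat_add j, (hasSum_pow_div_factorial lam).tsum_eq, ← Real.exp_add,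
      neg_add_cancel, Real.exp_zero]
  have hPo : PoSet A lam = Real.exp (-lam) * (S₁ + T₁) := by
    rw [poSet_eq_exp_mul_tsum, (hu.indicator A).sum_add_tsum_nat_add j]
  have hsum : ∑ m ∈ range j, (A.indicator (fun _ => (1 : ℝ)) m - PoSet A lam) * u m
      = S₁ - PoSet A lam * S₂ := by
    rw [mul_sum, ← sum_sub_distrib]
    refine sum_congr rfl fun m _ => ?_
    by_cases hm : m ∈ A <;> simp [hm, sub_mul]
  -- The sum is `e^{-λ} (S₁ T₂ - T₁ S₂)`, and the tail `T₂ = O(λ^j)` compensates the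
  -- factor `λ^{-j}` in the closed form of `g`: this keeps `g` bounded as `λ → 0`.
  have hcross : S₁ - PoSet A lam * S₂ = Real.exp (-lam) * (S₁ * T₂ - T₁ * S₂) := by
    linear_combination (-S₂) * hPo + (-S₁) * hexp
  have hcross_le : |S₁ * T₂ - T₁ * S₂| ≤ S₂ * T₂ :=
    abs_mul_sub_mul_le (sum_nonneg fun m _ => hAu0 m) (sum_le_sum fun m _ => hAu m)
      (tsum_nonneg fun i => hAu0 _) hT₁T₂
  calc |∑ m ∈ range j, (A.indicator (fun _ => (1 : ℝ)) m - PoSet A lam) * u m|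
      = Real.exp (-lam) * |S₁ * T₂ - T₁ * S₂| := by
        rw [hsum, hcross, abs_mul, abs_of_pos (Real.exp_pos _)]
    _ ≤ Real.exp (-lam) * (S₂ * T₂) := by gcongr
    _ = T₂ - Real.exp (-lam) * T₂ ^ 2 := by linear_combination T₂ * hexp
    _ ≤ T₂ := sub_le_self _ (by positivity)
    _ ≤ lam ^ j / j ! * Real.exp lam := tsum_pow_div_factorial_add_le hlam j

lemma abs_steinChen_le_exp (A : Set ℕ) {lam : ℝ} (hlam : 0 ≤ lam) :
    ∀ j, |steinChen j lam A| ≤ Real.exp lam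
  | 0 => by simp [steinChen, (Real.exp_pos lam).le]
  | j + 1 => by
    rcases hlam.eq_or_lt with rfl | hpos
    · have : |(j : ℝ) + 1|⁻¹ ≤ 1 := by
        rw [abs_of_pos (by positivity)]
        exact inv_le_one_of_one_le₀ (by simp)
      by_cases h0 : 0 ∈ A <;> by_cases hj : j + 1 ∈ A <;> simp [steinChen, h0, hj, this]
    · rw [steinChen_succ_of_pos A hpos, abs_mul, abs_of_nonneg (by positivity)]
      calc (j ! / lam ^ (j + 1) : ℝ) * |∑ m ∈ range (j + 1),
              (A.indicator (fun _ => (1 : ℝ)) m - PoSet A lam) * (lam ^ m / m !)|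
          ≤ j ! / lam ^ (j + 1) * (lam ^ (j + 1) / (j + 1) ! * Real.exp lam) := by
            gcongr; exact abs_sum_indicator_sub_poSet_le A hlam (j + 1)
        _ = Real.exp lam / (j + 1) := by
            rw [Nat.factorial_succ]; push_cast; field_simp
        _ ≤ Real.exp lam :=
            div_le_self (Real.exp_pos _).le (by linarith [j.cast_nonneg (α := ℝ)])

lemma measurable_poSet (A : Set ℕ) : Measurable (PoSet A) := by
  have hpartial (N : ℕ) :
      Measurable fun lam : ℝ => ∑ k ∈ range N, A.indicator (fun m => lam ^ m / m !) k := by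
    refine Finset.measurable_sum _ fun k _ => ?_
    by_cases hk : k ∈ A <;> simp only [hk, Set.indicator_of_mem, Set.indicator_of_notMem,
      not_false_eq_true] <;> fun_prop
  rw [funext (poSet_eq_exp_mul_tsum A)]
  refine (Real.measurable_exp.comp measurable_neg).mul
    (measurable_of_tendsto_metrizable hpartial ?_)
  exact tendsto_pi_nhds.2 fun lam =>
    ((Real.summable_pow_div_factorial lam).indicator A).hasSum.tendsto_sum_nat

lemma measurable_steinChen (A : Set ℕ) : ∀ j, Measurable fun lam => steinChen j lam A
  | 0 => measurable_const
  | j + 1 => by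
    have := measurable_steinChen A j
    have := measurable_poSet A
    simp only [steinChen]
    refine .add (by fun_prop) (.mul (.mul measurable_const ?_) measurable_const)
    exact Measurable.ite (measurableSet_singleton 0) measurable_const measurable_const

section Indicators

variable {ι α : Type*} (B : ι → Set α)

lemma sum_indicator_one_le_card (s : Finset ι) (ω : α) :
    ∑ j ∈ s, (B j).indicator (fun _ => (1 : ℕ)) ω ≤ s.card := by
  refine (s.sum_le_card_nsmul _ 1 fun j _ => ?_).trans_eq (by simp)
  by_cases hω : ω ∈ B j <;> simp [hω]

lemma indicator_one_mul_sum_indicator_one_add [Fintype ι] [DecidableEq ι] {β : Type*}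
    [MulZeroOneClass β] (i : ι) (F : ℕ → β) (k : ℕ) (ω : α) :
    (B i).indicator (fun _ => (1 : β)) ω * F (∑ j, (B j).indicator (fun _ => (1 : ℕ)) ω + k)
      = (B i).indicator (fun _ => (1 : β)) ω
        * F (∑ j ∈ univ.erase i, (B j).indicator (fun _ => (1 : ℕ)) ω + k + 1) := by
  by_cases hω : ω ∈ B i
  · rw [← sum_erase_add _ _ (mem_univ i)]
    simp only [Set.indicator_of_mem hω, add_right_comm _ 1 k]
  · simp [hω]

lemma measurable_sum_indicator_one_generateFrom {T : Set ι} {s : Finset ι}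
    (hsT : ∀ j ∈ s, j ∈ T) :
    Measurable[generateFrom {t | ∃ j ∈ T, B j = t}]
      fun ω => ∑ j ∈ s, (B j).indicator (fun _ => (1 : ℕ)) ω :=
  Finset.measurable_sum _ fun j hj =>
    measurable_const.indicator (measurableSet_generateFrom ⟨j, hsT j hj, rfl⟩)

end Indicators

section ConditionalExpectation

variable {Ω : Type*} {m mΩ : MeasurableSpace Ω} {μ : Measure Ω}

lemma aestronglyMeasurable_steinChen_comp {H : Ω → ℝ} (hH : AEStronglyMeasurable[m] H μ)
    (j : ℕ) (A : Set ℕ) : AEStronglyMeasurable[m] (fun ω => steinChen j (H ω) A) μ :=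
  ⟨fun ω => steinChen j (hH.mk H ω) A,
    ((measurable_steinChen A j).comp hH.stronglyMeasurable_mk.measurable).stronglyMeasurable,
    hH.ae_eq_mk.mono fun _ hω => congrArg (steinChen j · A) hω⟩

lemma integrable_steinChen_comp [IsFiniteMeasure μ] {H : Ω → ℝ}
    (hH : AEStronglyMeasurable H μ) {L : ℝ} (hH_bdd : ∀ᵐ ω ∂μ, H ω ∈ Set.Icc 0 L)
    (j : ℕ) (A : Set ℕ) :
    Integrable (fun ω => steinChen j (H ω) A) μ :=
  .of_bound (aestronglyMeasurable_steinChen_comp hH j A) (Real.exp L) <| hH_bdd.mono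
    fun _ hω => (abs_steinChen_le_exp A hω.1 j).trans (Real.exp_le_exp.2 hω.2)

lemma integrable_indicator_one_mul {s : Set Ω} (hs : MeasurableSet s) {f : Ω → ℝ}
    (hf : Integrable f μ) : Integrable (s.indicator (fun _ => (1 : ℝ)) * f) μ :=
  hf.bdd_mul (c := 1) (aestronglyMeasurable_const.indicator hs) <| ae_of_all _ fun ω => by
    by_cases hω : ω ∈ s <;> simp [hω]

lemma ae_condExp_natCast_mem_Icc (hm : m ≤ mΩ) [IsFiniteMeasure μ] {W : Ω → ℕ}
    (hW : Measurable W) {N : ℕ} (hWN : ∀ ω, W ω ≤ N) :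
    ∀ᵐ ω ∂μ, μ[fun ω => (W ω : ℝ) | m] ω ∈ Set.Icc 0 (N : ℝ) := by
  have hWN' (ω : Ω) : (W ω : ℝ) ≤ N := by exact_mod_cast hWN ω
  have hint : Integrable (fun ω => (W ω : ℝ)) μ :=
    .of_bound (measurable_from_nat.comp hW).aestronglyMeasurable N
      (ae_of_all _ fun ω => by simpa using hWN' ω)
  have hle := condExp_mono (m := m) hint (integrable_const (N : ℝ)) (ae_of_all _ hWN')
  rw [condExp_const hm] at hle
  filter_upwards [condExp_nonneg (m := m) (f := fun ω => (W ω : ℝ))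
    (ae_of_all μ fun ω => (W ω).cast_nonneg), hle] with ω h0 hN using ⟨h0, hN⟩

end ConditionalExpectation

namespace ProbabilityTheory.CondIndep

variable {Ω : Type*} {m m₁ m₂ mΩ : MeasurableSpace Ω} [StandardBorelSpace Ω]
  {hm : m ≤ mΩ} {μ : Measure Ω} [IsFiniteMeasure μ] {s : Set Ω}

lemma condExp_indicator_mul_indicator_mul (h : CondIndep m m₁ m₂ hm μ)
    (hm₁ : m₁ ≤ mΩ) (hm₂ : m₂ ≤ mΩ) (hs : MeasurableSet[m₁] s) {t : Set Ω}
    (ht : MeasurableSet[m₂] t) {c : Ω → ℝ} (hc : AEStronglyMeasurable[m] c μ)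
    (hci : Integrable c μ) :
    μ[s.indicator (fun _ => (1 : ℝ)) * (t.indicator (fun _ => (1 : ℝ)) * c) | m]
      =ᵐ[μ] μ⟦s | m⟧ * μ[t.indicator (fun _ => (1 : ℝ)) * c | m] := by
  have hst : MeasurableSet (s ∩ t) := (hm₁ _ hs).inter (hm₂ _ ht)
  have hpull_st : μ[(s ∩ t).indicator (fun _ => (1 : ℝ)) * c | m]
      =ᵐ[μ] μ⟦s ∩ t | m⟧ * c :=
    condExp_mul_of_aestronglyMeasurable_right hc (integrable_indicator_one_mul hst hci)
      ((integrable_const 1).indicator hst)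
  have hpull_t : μ[t.indicator (fun _ => (1 : ℝ)) * c | m] =ᵐ[μ] μ⟦t | m⟧ * c :=
    condExp_mul_of_aestronglyMeasurable_right hc (integrable_indicator_one_mul (hm₂ _ ht) hci)
      ((integrable_const 1).indicator (hm₂ _ ht))
  have hfactor := (condIndep_iff m m₁ m₂ hm hm₁ hm₂ μ).1 h s t hs ht
  have hinter : s.indicator (fun _ => (1 : ℝ)) * t.indicator (fun _ => 1)
      = (s ∩ t).indicator (fun _ => 1) := Set.inter_indicator_one.symm
  rw [← mul_assoc, hinter]
  filter_upwards [hpull_st, hpull_t, hfactor] with ω h_st h_t h_fac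
  simp only [Pi.mul_apply] at h_st h_t h_fac ⊢
  rw [h_st, h_t, h_fac]
  ring

lemma condExp_indicator_mul_comp (h : CondIndep m m₁ m₂ hm μ) (hm₁ : m₁ ≤ mΩ)
    (hm₂ : m₂ ≤ mΩ) (hs : MeasurableSet[m₁] s) {X : Ω → ℕ} (hX : Measurable[m₂] X)
    {N : ℕ} (hXN : ∀ ω, X ω < N) {c : ℕ → Ω → ℝ}
    (hc : ∀ j, AEStronglyMeasurable[m] (c j) μ) (hci : ∀ j, Integrable (c j) μ) :
    μ[fun ω => s.indicator (fun _ => (1 : ℝ)) ω * c (X ω) ω | m]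
      =ᵐ[μ] μ⟦s | m⟧ * μ[fun ω => c (X ω) ω | m] := by
  set D : ℕ → Set Ω := fun j => X ⁻¹' {j}
  have hD (j : ℕ) : MeasurableSet[m₂] (D j) := hX (measurableSet_singleton j)
  have hint (j : ℕ) : Integrable ((D j).indicator (fun _ => (1 : ℝ)) * c j) μ :=
    integrable_indicator_one_mul (hm₂ _ (hD j)) (hci j)
  have hdecomp : (fun ω => c (X ω) ω)
      = ∑ j ∈ range N, (D j).indicator (fun _ => (1 : ℝ)) * c j := by
    ext ω
    rw [Finset.sum_apply, sum_eq_single_of_mem (X ω) (mem_range.2 (hXN ω))]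
    · simp [D]
    · intro j _ hj
      simp [D, Ne.symm hj]
  have hint_s (j : ℕ) := integrable_indicator_one_mul (hm₁ _ hs) (hint j)
  have hterm (j : ℕ) := h.condExp_indicator_mul_indicator_mul hm₁ hm₂ hs (hD j) (hc j) (hci j)
  change μ[s.indicator (fun _ => (1 : ℝ)) * fun ω => c (X ω) ω | m] =ᵐ[μ] _
  rw [hdecomp, Finset.mul_sum]
  filter_upwards [condExp_finsetSum (fun j _ => hint_s j) m,
      condExp_finsetSum (fun j _ => hint j) m, ae_all_iff.2 hterm] with ω hL hR hj
  rw [hL, Pi.mul_apply, hR, Finset.sum_apply, Finset.sum_apply, mul_sum]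
  exact sum_congr rfl fun j _ => hj j

end ProbabilityTheory.CondIndep

theorem condexp_steinChen_condIndep_general
    {Ω : Type*} (𝓖 : MeasurableSpace Ω) [mΩ : MeasurableSpace Ω] [StandardBorelSpace Ω]
    (h𝓖 : 𝓖 ≤ mΩ)
    (μ : Measure Ω) [IsProbabilityMeasure μ]
    (n : ℕ) (B : Fin (n + 1) → Set Ω) (hBmeas : ∀ i, MeasurableSet (B i))
    (hBindep : ProbabilityTheory.iCondIndepSet 𝓖 h𝓖 B μ)
    (W : Ω → ℕ) (hW : W = fun ω => ∑ j, (B j).indicator (fun _ => (1 : ℕ)) ω)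
    (Wi : Fin (n + 1) → Ω → ℕ)
    (hWi : ∀ i, Wi i = fun ω => ∑ j ∈ Finset.univ.erase i,
      (B j).indicator (fun _ => (1 : ℕ)) ω)
    (H : Ω → ℝ)
    (hH : H =ᵐ[μ] μ[fun ω => (W ω : ℝ) | 𝓖])
    (A : Set ℕ) (k : ℕ) (i : Fin (n + 1)) :
    (μ[fun ω => (B i).indicator (fun _ => (1 : ℝ)) ω
        * steinChen (Wi i ω + k) (H ω) A | 𝓖]
      =ᵐ[μ]
    fun ω => (μ[(B i).indicator (fun _ => (1 : ℝ)) | 𝓖]) ω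
        * (μ[fun ω' => steinChen (Wi i ω' + k) (H ω') A | 𝓖]) ω) ∧
    (μ[fun ω => (B i).indicator (fun _ => (1 : ℝ)) ω
        * steinChen (W ω + k) (H ω) A | 𝓖]
      =ᵐ[μ]
    fun ω => (μ[(B i).indicator (fun _ => (1 : ℝ)) | 𝓖]) ω
        * (μ[fun ω' => steinChen (Wi i ω' + k + 1) (H ω') A | 𝓖]) ω) := by
  subst hW
  obtain rfl : Wi = fun i ω => ∑ j ∈ univ.erase i, (B j).indicator (fun _ => (1 : ℕ)) ω :=
    funext hWi
  have hle (T : Set (Fin (n + 1))) : generateFrom {t | ∃ j ∈ T, B j = t} ≤ mΩ :=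
    generateFrom_le <| by rintro _ ⟨j, -, rfl⟩; exact hBmeas j
  have hH_meas : AEStronglyMeasurable[𝓖] H μ :=
    stronglyMeasurable_condExp.aestronglyMeasurable.congr hH.symm
  have hH_bdd : ∀ᵐ ω ∂μ, H ω ∈ Set.Icc 0 ((n + 1 : ℕ) : ℝ) := by
    have hW_meas := (measurable_sum_indicator_one_generateFrom B (s := univ) fun j _ =>
      mem_univ j).mono (hle _) le_rfl
    filter_upwards [hH, ae_condExp_natCast_mem_Icc h𝓖 hW_meas (N := n + 1)
      fun ω => (sum_indicator_one_le_card B univ ω).trans_eq (by simp)]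
      with ω h h' using h ▸ h'
  have key (k' : ℕ) :=
    (hBindep.condIndep_generateFrom_of_disjoint hBmeas {i} {i}ᶜ disjoint_compl_right)
      |>.condExp_indicator_mul_comp (hle _) (hle _) (measurableSet_generateFrom ⟨i, rfl, rfl⟩)
        (measurable_sum_indicator_one_generateFrom B fun j hj => ne_of_mem_erase hj)
        (N := n + 1) (fun ω => (sum_indicator_one_le_card B (univ.erase i) ω).trans_lt (by simp))
        (c := fun j ω => steinChen (j + k') (H ω) A)
        (fun j => aestronglyMeasurable_steinChen_comp hH_meas _ A)
        (fun j => integrable_steinChen_comp (hH_meas.mono h𝓖) hH_bdd _ A)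
  refine ⟨key k, ?_⟩
  have hW_on_Bi := funext fun ω =>
    indicator_one_mul_sum_indicator_one_add B i (fun w => steinChen w (H ω) A) k ω
  rw [hW_on_Bi]
  exact key (k + 1)

/-- Scalar instance of Lemma 4.10: for events B_0,...,B_n conditionally independent
given 𝓖, W = Σ_j 1_{B_j}, W_i = Σ_{j≠i} 1_{B_j}, and H a nonnegative version of
E[W|𝓖]: for every A ⊆ ℕ, k ∈ ℕ and i,
E[1_{B_i} * g(W_i+k, H, A) | 𝓖] = P[B_i|𝓖] * E[g(W_i+k, H, A) | 𝓖]  a.e., and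
E[1_{B_i} * g(W+k, H, A) | 𝓖] = P[B_i|𝓖] * E[g(W_i+k+1, H, A) | 𝓖]  a.e. -/
theorem condexp_steinChen_condIndep
    {Ω : Type*} (𝓖 : MeasurableSpace Ω) [mΩ : MeasurableSpace Ω] [StandardBorelSpace Ω]
    (h𝓖 : 𝓖 ≤ mΩ)
    (μ : Measure Ω) [IsProbabilityMeasure μ]
    (n : ℕ) (B : Fin (n + 1) → Set Ω) (hBmeas : ∀ i, MeasurableSet (B i))
    (hBindep : ProbabilityTheory.iCondIndepSet 𝓖 h𝓖 B μ)
    (W : Ω → ℕ) (hW : W = fun ω => ∑ j, (B j).indicator (fun _ => (1 : ℕ)) ω)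
    (Wi : Fin (n + 1) → Ω → ℕ)
    (hWi : ∀ i, Wi i = fun ω => ∑ j ∈ Finset.univ.erase i,
      (B j).indicator (fun _ => (1 : ℕ)) ω)
    (H : Ω → ℝ) (hH0 : ∀ ω, 0 ≤ H ω)
    (hH : H =ᵐ[μ] μ[fun ω => (W ω : ℝ) | 𝓖])
    (A : Set ℕ) (k : ℕ) (i : Fin (n + 1)) :
    (μ[fun ω => (B i).indicator (fun _ => (1 : ℝ)) ω
        * steinChen (Wi i ω + k) (H ω) A | 𝓖]
      =ᵐ[μ]
    fun ω => (μ[(B i).indicator (fun _ => (1 : ℝ)) | 𝓖]) ω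
        * (μ[fun ω' => steinChen (Wi i ω' + k) (H ω') A | 𝓖]) ω) ∧
    (μ[fun ω => (B i).indicator (fun _ => (1 : ℝ)) ω
        * steinChen (W ω + k) (H ω) A | 𝓖]
      =ᵐ[μ]
    fun ω => (μ[(B i).indicator (fun _ => (1 : ℝ)) | 𝓖]) ω
        * (μ[fun ω' => steinChen (Wi i ω' + k + 1) (H ω') A | 𝓖]) ω) :=
  condexp_steinChen_condIndep_general 𝓖 (mΩ := mΩ) h𝓖 μ n B hBmeas hBindep W hW Wi hWi H hH A k i
end

section
/- (Infinite sum law of small numbers.) Let (B_j)_{j∈ℕ} be events in 𝓕 that are conditionally independent given 𝓖, and suppose s := Σ_{j=0}^{∞} 1_{B_j} is integrable (in particular finite almost everywhere). Let H be a nonnegative version of E[s|𝓖] and, for each j, let h_j be a version of ℙ[B_j|𝓖] with 0 ≤ h_j ≤ 1. Then for every A ⊆ ℕ: |ℙ[{s ∈ A}|𝓖] − Po(A;H)| ≤ sup_{j∈ℕ} h_j almost everywhere. -/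
open scoped BigOperators

open MeasureTheory

namespace LSN

open Finset

noncomputable def q (lam : ℝ) (k : ℕ) : ℝ := lam ^ k / (Nat.factorial k)

lemma summable_q (lam : ℝ) : Summable (q lam) := Real.summable_pow_div_factorial lam

lemma tsum_q (lam : ℝ) : ∑' k, q lam k = Real.exp lam := by
  rw [Real.exp_eq_exp_ℝ, NormedSpace.exp_eq_tsum_div]
  simp only [q]

lemma q_nonneg {lam : ℝ} (h : 0 ≤ lam) (k : ℕ) : 0 ≤ q lam k :=
  div_nonneg (pow_nonneg h k) (Nat.cast_nonneg _)

lemma q_zero (lam : ℝ) : q lam 0 = 1 := by simp [q]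

lemma Po_eq (k : ℕ) (lam : ℝ) : Po k lam = q lam k * Real.exp (-lam) := by
  unfold Po q; ring

lemma Po_nonneg {lam : ℝ} (h : 0 ≤ lam) (k : ℕ) : 0 ≤ Po k lam := by
  rw [Po_eq]; exact mul_nonneg (q_nonneg h k) (Real.exp_nonneg _)

lemma summable_Po (lam : ℝ) : Summable (fun k => Po k lam) := by
  simp only [Po_eq]; exact (summable_q lam).mul_right _

lemma tsum_Po (lam : ℝ) : ∑' k, Po k lam = 1 := by
  simp only [Po_eq]
  rw [tsum_mul_right, tsum_q, ← Real.exp_add]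
  simp

lemma PoSet_eq_tsum (A : Set ℕ) (lam : ℝ) :
    PoSet A lam = ∑' k, A.indicator (fun k => Po k lam) k := by
  unfold PoSet; exact _root_.tsum_subtype A (fun k => Po k lam)

lemma PoSet_nonneg {lam : ℝ} (h : 0 ≤ lam) (A : Set ℕ) : 0 ≤ PoSet A lam := by
  rw [PoSet_eq_tsum]
  exact tsum_nonneg fun k => Set.indicator_nonneg (fun k _ => Po_nonneg h k) k

lemma PoSet_le_one {lam : ℝ} (h : 0 ≤ lam) (A : Set ℕ) : PoSet A lam ≤ 1 := by
  rw [PoSet_eq_tsum, ← tsum_Po lam]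
  exact Summable.tsum_le_tsum (fun k => Set.indicator_le_self' (fun k _ => Po_nonneg h k) k)
    ((summable_Po lam).indicator A) (summable_Po lam)

lemma PoSet_zero (A : Set ℕ) : PoSet A 0 = A.indicator (fun _ => (1:ℝ)) 0 := by
  rw [PoSet_eq_tsum]
  rw [tsum_eq_single 0]
  · by_cases h0 : (0:ℕ) ∈ A <;> simp [Set.indicator, h0, Po]
  · intro k hk
    by_cases h : k ∈ A <;> simp [Set.indicator, h, Po, zero_pow hk]

noncomputable def EE (lam : ℝ) (j : ℕ) : ℝ := ∑ k ∈ Finset.range (j+1), q lam k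

noncomputable def RR (lam : ℝ) (j : ℕ) : ℝ := ∑' i, q lam (i + j)

lemma summable_q_add (lam : ℝ) (j : ℕ) : Summable (fun i => q lam (i + j)) :=
  (summable_nat_add_iff j).2 (summable_q lam)

lemma EE_add_RR (lam : ℝ) (j : ℕ) : EE lam j + RR lam (j+1) = Real.exp lam := by
  rw [EE, RR, ← tsum_q lam]
  exact Summable.sum_add_tsum_nat_add (j+1) (summable_q lam)

lemma lam_q (lam : ℝ) (k : ℕ) : lam * q lam k = ((k:ℝ)+1) * q lam (k+1) := by
  unfold q
  rw [Nat.factorial_succ]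
  push_cast
  have h1 : (Nat.factorial k : ℝ) ≠ 0 := Nat.cast_ne_zero.2 (Nat.factorial_ne_zero k)
  have h2 : ((k:ℝ)+1) ≠ 0 := by positivity
  field_simp
  ring

lemma EE_ineq {lam : ℝ} (h : 0 ≤ lam) (j : ℕ) :
    lam * EE lam j ≤ ((j:ℝ)+1) * EE lam (j+1) := by
  have h1 : lam * EE lam j = ∑ k ∈ range (j+1), ((k:ℝ)+1) * q lam (k+1) := by
    rw [EE, mul_sum]; exact sum_congr rfl fun k _ => lam_q lam k
  have h2 : ∑ k ∈ range (j+2), (k:ℝ) * q lam k = ∑ k ∈ range (j+1), ((k:ℝ)+1) * q lam (k+1) := by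
    rw [Finset.sum_range_succ' (fun k => (k:ℝ) * q lam k) (j+1)]
    push_cast
    simp
  rw [h1, ← h2, EE, mul_sum]
  apply sum_le_sum
  intro k hk
  have hk' : (k:ℝ) ≤ (j:ℝ)+1 := by
    have hb : k ≤ j+1 := by have := Finset.mem_range.1 hk; omega
    exact_mod_cast hb
  exact mul_le_mul_of_nonneg_right hk' (q_nonneg h k)

lemma RR_nonneg {lam : ℝ} (h : 0 ≤ lam) (j : ℕ) : 0 ≤ RR lam j :=
  tsum_nonneg fun i => q_nonneg h _

lemma RR_ineq {lam : ℝ} (h : 0 ≤ lam) (j : ℕ) :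
    ((j:ℝ)+1) * RR lam (j+2) ≤ lam * RR lam (j+1) := by
  have key : ∀ i : ℕ, lam * q lam (i + (j+1)) = ((i:ℝ)+(j:ℝ)+2) * q lam (i + (j+2)) := by
    intro i
    have h0 := lam_q lam (i + (j+1))
    have e1 : i + (j+1) + 1 = i + (j+2) := by omega
    rw [e1] at h0
    rw [h0]
    congr 1
    push_cast; ring
  have hs1 : Summable (fun i => lam * q lam (i + (j+1))) := (summable_q_add lam (j+1)).mul_left _
  have hs2 : Summable (fun i : ℕ => ((i:ℝ)+(j:ℝ)+2) * q lam (i + (j+2))) := hs1.congr key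
  have h1 : lam * RR lam (j+1) = ∑' i : ℕ, ((i:ℝ)+(j:ℝ)+2) * q lam (i + (j+2)) := by
    rw [RR, ← tsum_mul_left]
    exact tsum_congr key
  have h2 : ((j:ℝ)+1) * RR lam (j+2) = ∑' i : ℕ, ((j:ℝ)+1) * q lam (i + (j+2)) := by
    rw [RR, ← tsum_mul_left]
  rw [h1, h2]
  refine Summable.tsum_le_tsum (fun i => ?_) ((summable_q_add lam (j+2)).mul_left _) hs2
  have hle : ((j:ℝ)+1) ≤ ((i:ℝ)+(j:ℝ)+2) := by
    have : (0:ℝ) ≤ (i:ℝ) := Nat.cast_nonneg i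
    linarith
  exact mul_le_mul_of_nonneg_right hle (q_nonneg h _)

noncomputable def fA (A : Set ℕ) (lam : ℝ) (k : ℕ) : ℝ :=
  A.indicator (fun _ => (1:ℝ)) k - PoSet A lam

noncomputable def gg (A : Set ℕ) (lam : ℝ) : ℕ → ℝ
  | 0 => 0
  | (j+1) => ((Nat.factorial j : ℝ) / lam ^ (j+1)) *
      ∑ k ∈ Finset.range (j+1), fA A lam k * q lam k

noncomputable def gm (m : ℕ) (lam : ℝ) : ℕ → ℝ
  | 0 => 0
  | (j+1) => ((Nat.factorial j : ℝ) / lam ^ (j+1)) *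
      ((if m ≤ j then q lam m else 0) - Po m lam * EE lam j)

lemma stein_identity (A : Set ℕ) {lam : ℝ} (hl : lam ≠ 0) (j : ℕ) :
    lam * gg A lam (j+1) - (j:ℝ) * gg A lam j = fA A lam j := by
  cases j with
  | zero =>
    simp only [gg, Nat.cast_zero, zero_mul, sub_zero, Finset.range_one, Finset.sum_singleton,
      q_zero, mul_one, Nat.factorial_zero, Nat.cast_one, pow_one]
    field_simp
    simp [q_zero]
  | succ m =>
    simp only [gg, Finset.sum_range_succ]
    have hfac : (Nat.factorial (m+1) : ℝ) = ((m:ℝ)+1) * (Nat.factorial m : ℝ) := by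
      rw [Nat.factorial_succ]; push_cast; ring
    have hq : q lam (m+1) = lam ^ (m+1) / (Nat.factorial (m+1) : ℝ) := rfl
    have hfne : (Nat.factorial (m+1) : ℝ) ≠ 0 := Nat.cast_ne_zero.2 (Nat.factorial_ne_zero _)
    have hfne' : (Nat.factorial m : ℝ) ≠ 0 := Nat.cast_ne_zero.2 (Nat.factorial_ne_zero _)
    have hlp : lam ^ (m+1) ≠ 0 := pow_ne_zero _ hl
    have hlp2 : lam ^ (m+2) ≠ 0 := pow_ne_zero _ hl
    push_cast
    rw [hq, hfac]
    field_simp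
    ring

lemma gm_tail (m : ℕ) {lam : ℝ} (hl : 0 < lam) (j : ℕ) :
    gm m lam (j+1) = ((Nat.factorial j : ℝ) / lam ^ (j+1)) *
      (Po m lam * RR lam (j+1) - (if j+1 ≤ m then q lam m else 0)) := by
  have h1 : EE lam j + RR lam (j+1) = Real.exp lam := EE_add_RR lam j
  have h2 : Po m lam * Real.exp lam = q lam m := by
    rw [Po_eq, mul_assoc, ← Real.exp_add]
    simp
  have h3 : Po m lam * EE lam j + Po m lam * RR lam (j+1) = q lam m := by
    rw [← mul_add, h1, h2]
  have h4 : (if m ≤ j then q lam m else 0) + (if j+1 ≤ m then q lam m else 0) = q lam m := by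
    rcases le_or_gt m j with h | h
    · rw [if_pos h, if_neg (by omega)]; ring
    · rw [if_neg (by omega), if_pos (by omega)]; ring
  simp only [gm]
  congr 1
  linarith

lemma one_div_fac_pow (j : ℕ) {lam : ℝ} (hl : 0 < lam) :
    ((Nat.factorial (j+1) : ℝ) / lam ^ (j+2)) * q lam (j+1) = 1 / lam := by
  have hfne : (Nat.factorial (j+1) : ℝ) ≠ 0 := Nat.cast_ne_zero.2 (Nat.factorial_ne_zero _)
  have hlp : lam ^ (j+1) ≠ 0 := pow_ne_zero _ hl.ne'
  show ((Nat.factorial (j+1) : ℝ) / lam ^ (j+2)) * (lam ^ (j+1) / (Nat.factorial (j+1):ℝ)) = 1 / lam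
  rw [pow_succ]
  field_simp

/-- the scaled difference constant `c j ≥ 0`. -/
lemma c_nonneg {lam : ℝ} (hl : 0 < lam) (j : ℕ) :
    0 ≤ ((Nat.factorial (j+1) : ℝ) / lam ^ (j+2)) * EE lam (j+1)
      - ((Nat.factorial j : ℝ) / lam ^ (j+1)) * EE lam j := by
  have key : lam * EE lam j ≤ ((j:ℝ)+1) * EE lam (j+1) := EE_ineq hl.le j
  have hfac : (Nat.factorial (j+1) : ℝ) = ((j:ℝ)+1) * (Nat.factorial j : ℝ) := by
    rw [Nat.factorial_succ]; push_cast; ring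
  have hpos : 0 < (Nat.factorial j : ℝ) / lam ^ (j+2) :=
    div_pos (Nat.cast_pos.2 (Nat.factorial_pos j)) (pow_pos hl _)
  have e1 : ((Nat.factorial (j+1) : ℝ) / lam ^ (j+2)) * EE lam (j+1)
      - ((Nat.factorial j : ℝ) / lam ^ (j+1)) * EE lam j
      = ((Nat.factorial j : ℝ) / lam ^ (j+2)) * (((j:ℝ)+1) * EE lam (j+1) - lam * EE lam j) := by
    rw [hfac, pow_succ]
    have hlp : lam ^ (j+1) ≠ 0 := pow_ne_zero _ hl.ne'
    field_simp
  rw [e1]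
  exact mul_nonneg hpos.le (by linarith)

lemma b_nonpos {lam : ℝ} (hl : 0 < lam) (j : ℕ) :
    ((Nat.factorial (j+1) : ℝ) / lam ^ (j+2)) * RR lam (j+2)
      - ((Nat.factorial j : ℝ) / lam ^ (j+1)) * RR lam (j+1) ≤ 0 := by
  have key : ((j:ℝ)+1) * RR lam (j+2) ≤ lam * RR lam (j+1) := RR_ineq hl.le j
  have hfac : (Nat.factorial (j+1) : ℝ) = ((j:ℝ)+1) * (Nat.factorial j : ℝ) := by
    rw [Nat.factorial_succ]; push_cast; ring
  have hpos : 0 < (Nat.factorial j : ℝ) / lam ^ (j+2) :=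
    div_pos (Nat.cast_pos.2 (Nat.factorial_pos j)) (pow_pos hl _)
  have e1 : ((Nat.factorial (j+1) : ℝ) / lam ^ (j+2)) * RR lam (j+2)
      - ((Nat.factorial j : ℝ) / lam ^ (j+1)) * RR lam (j+1)
      = ((Nat.factorial j : ℝ) / lam ^ (j+2)) * (((j:ℝ)+1) * RR lam (j+2) - lam * RR lam (j+1)) := by
    rw [hfac, pow_succ]
    have hlp : lam ^ (j+1) ≠ 0 := pow_ne_zero _ hl.ne'
    field_simp
  rw [e1]
  exact mul_nonpos_of_nonneg_of_nonpos hpos.le (by linarith)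

lemma summable_ite_q (lam : ℝ) (j : ℕ) :
    Summable (fun m => if m ≤ j then q lam m else 0) := by
  apply summable_of_ne_finset_zero (s := Finset.range (j+1))
  intro m hm
  rw [if_neg (by simp at hm; omega)]

lemma summable_gm {lam : ℝ} (r : ℕ) :
    Summable (fun m => gm m lam (r+1)) := by
  simp only [gm]
  exact (((summable_ite_q lam r).sub ((summable_Po lam).mul_right (EE lam r)))).mul_left _

lemma tsum_ite_q (lam : ℝ) (j : ℕ) :
    ∑' m, (if m ≤ j then q lam m else 0) = EE lam j := by
  rw [tsum_eq_sum (s := Finset.range (j+1)) (fun m hm => if_neg (by simp at hm; omega))]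
  rw [EE]
  exact Finset.sum_congr rfl fun k hk => if_pos (by simp at hk; omega)

lemma tsum_gm {lam : ℝ} (r : ℕ) :
    ∑' m, gm m lam (r+1) = 0 := by
  simp only [gm]
  rw [tsum_mul_left, Summable.tsum_sub (summable_ite_q lam r) ((summable_Po lam).mul_right (EE lam r))]
  rw [tsum_ite_q, tsum_mul_right, tsum_Po, one_mul, sub_self, mul_zero]

lemma gm_indicator_eq (A : Set ℕ) (lam : ℝ) (r m : ℕ) :
    A.indicator (fun m => gm m lam (r+1)) m
      = ((Nat.factorial r : ℝ) / lam ^ (r+1)) *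
        ((A.indicator (fun m => if m ≤ r then q lam m else 0) m)
          - (A.indicator (fun m => Po m lam) m) * EE lam r) := by
  by_cases hm : m ∈ A
  · simp only [Set.indicator_of_mem hm, gm]
  · simp only [Set.indicator_of_notMem hm]
    ring

lemma gg_eq_tsum (A : Set ℕ) {lam : ℝ} (r : ℕ) :
    gg A lam (r+1) = ∑' m, A.indicator (fun m => gm m lam (r+1)) m := by
  have hsum1 : Summable (A.indicator (fun m => if m ≤ r then q lam m else 0)) :=
    (summable_ite_q lam r).indicator A
  have hsum2 : Summable (A.indicator (fun m => Po m lam)) :=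
    (summable_Po lam).indicator A
  calc gg A lam (r+1)
      = ((Nat.factorial r : ℝ) / lam ^ (r+1)) *
        ((∑' m, A.indicator (fun m => if m ≤ r then q lam m else 0) m)
          - (∑' m, A.indicator (fun m => Po m lam) m) * EE lam r) := by
        have e1 : ∑' m, A.indicator (fun m => if m ≤ r then q lam m else 0) m
            = ∑ k ∈ Finset.range (r+1), A.indicator (fun _ => (1:ℝ)) k * q lam k := by
          rw [tsum_eq_sum (s := Finset.range (r+1))
            (fun m hm => by
              by_cases hmA : m ∈ A
              · rw [Set.indicator_of_mem hmA, if_neg (by simp at hm; omega)]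
              · rw [Set.indicator_of_notMem hmA])]
          refine Finset.sum_congr rfl fun k hk => ?_
          by_cases hkA : k ∈ A
          · rw [Set.indicator_of_mem hkA, Set.indicator_of_mem hkA,
              if_pos (by simp at hk; omega), one_mul]
          · rw [Set.indicator_of_notMem hkA, Set.indicator_of_notMem hkA, zero_mul]
        have e2 : ∑' m, A.indicator (fun m => Po m lam) m = PoSet A lam :=
          (PoSet_eq_tsum A lam).symm
        rw [e1, e2]
        simp only [gg]
        congr 1
        rw [EE, Finset.mul_sum, ← Finset.sum_sub_distrib]
        refine Finset.sum_congr rfl fun k _ => ?_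
        simp only [fA]
        ring
    _ = ∑' m, A.indicator (fun m => gm m lam (r+1)) m := by
        rw [← tsum_mul_right, ← Summable.tsum_sub hsum1 (hsum2.mul_right _), ← tsum_mul_left]
        exact tsum_congr fun m => (gm_indicator_eq A lam r m).symm

lemma d_nonpos {lam : ℝ} (hl : 0 < lam) {m j : ℕ} (hm : m ≠ j+1) :
    gm m lam (j+2) - gm m lam (j+1) ≤ 0 := by
  rcases le_or_gt m j with hle | hgt
  · -- m ≤ j : use tail forms
    rw [gm_tail m hl (j+1), gm_tail m hl j]
    rw [if_neg (by omega), if_neg (by omega)]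
    have := b_nonpos hl j
    have hPo := Po_nonneg hl.le m
    nlinarith [RR_nonneg hl.le (j+2), RR_nonneg hl.le (j+1)]
  · -- m ≥ j+2
    have hm2 : j + 2 ≤ m := by omega
    simp only [gm]
    rw [if_neg (by omega), if_neg (by omega)]
    have := c_nonneg hl j
    have hPo := Po_nonneg hl.le m
    nlinarith

lemma d_top_le {lam : ℝ} (hl : 0 < lam) (j : ℕ) :
    gm (j+1) lam (j+2) - gm (j+1) lam (j+1) ≤ 1 / lam := by
  simp only [gm]
  rw [if_pos (by omega), if_neg (by omega)]
  have h1 : ((Nat.factorial (j+1) : ℝ) / lam ^ (j+2)) * q lam (j+1) = 1 / lam :=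
    one_div_fac_pow j hl
  have hc := c_nonneg hl j
  have hPo := Po_nonneg hl.le (j+1)
  nlinarith

lemma gg_increment (A : Set ℕ) {lam : ℝ} (hl : 0 < lam) (j : ℕ) :
    |gg A lam (j+2) - gg A lam (j+1)| ≤ 1 / lam := by
  set d : ℕ → ℝ := fun m => gm m lam (j+2) - gm m lam (j+1) with hd
  have hsd : Summable d := (summable_gm (j+1)).sub (summable_gm j)
  have htd : ∑' m, d m = 0 := by
    rw [Summable.tsum_sub (summable_gm (j+1)) (summable_gm j), tsum_gm, tsum_gm, sub_self]
  have hindd : Summable (A.indicator d) := hsd.indicator A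
  have hgg : gg A lam (j+2) - gg A lam (j+1) = ∑' m, A.indicator d m := by
    rw [gg_eq_tsum A (j+1), gg_eq_tsum A j,
      ← Summable.tsum_sub ((summable_gm (j+1)).indicator A) ((summable_gm j).indicator A)]
    refine tsum_congr fun m => ?_
    by_cases hm : m ∈ A
    · simp only [Set.indicator_of_mem hm, hd]
    · simp only [Set.indicator_of_notMem hm, sub_zero]
  set u : ℕ → ℝ := fun m => if m = j+1 then max (d (j+1)) 0 else 0 with hu
  have hsu : Summable u := summable_of_ne_finset_zero (s := {j+1})
    (fun m hm => if_neg (by simpa using hm))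
  have htu : ∑' m, u m = max (d (j+1)) 0 := by
    rw [tsum_eq_single (j+1) (fun m hm => if_neg hm)]
    exact if_pos rfl
  have hle1 : ∀ m, A.indicator d m ≤ u m := by
    intro m
    by_cases hmj : m = j+1
    · subst hmj
      simp only [hu, if_pos rfl]
      by_cases hm : (j+1) ∈ A
      · rw [Set.indicator_of_mem hm]; exact le_max_left _ _
      · rw [Set.indicator_of_notMem hm]; exact le_max_right _ _
    · rw [hu]
      simp only [if_neg hmj]
      have hdm : d m ≤ 0 := d_nonpos hl hmj
      by_cases hm : m ∈ A
      · rw [Set.indicator_of_mem hm]; exact hdm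
      · rw [Set.indicator_of_notMem hm]
  have hle2 : ∀ m, d m - u m ≤ A.indicator d m := by
    intro m
    by_cases hmj : m = j+1
    · subst hmj
      simp only [hu, if_pos rfl]
      by_cases hm : (j+1) ∈ A
      · rw [Set.indicator_of_mem hm]
        have : (0:ℝ) ≤ max (d (j+1)) 0 := le_max_right _ _
        linarith
      · rw [Set.indicator_of_notMem hm]
        have : d (j+1) ≤ max (d (j+1)) 0 := le_max_left _ _
        linarith
    · rw [hu]
      simp only [if_neg hmj, sub_zero]
      have hdm : d m ≤ 0 := d_nonpos hl hmj
      by_cases hm : m ∈ A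
      · rw [Set.indicator_of_mem hm]
      · rw [Set.indicator_of_notMem hm]; exact hdm
  have hmax : max (d (j+1)) 0 ≤ 1 / lam := by
    apply max_le (d_top_le hl j)
    positivity
  rw [hgg, abs_le]
  constructor
  · have : ∑' m, (d m - u m) ≤ ∑' m, A.indicator d m :=
      Summable.tsum_le_tsum hle2 (hsd.sub hsu) hindd
    rw [Summable.tsum_sub hsd hsu, htd, htu, zero_sub] at this
    linarith
  · have : ∑' m, A.indicator d m ≤ ∑' m, u m := Summable.tsum_le_tsum hle1 hindd hsu
    rw [htu] at this
    linarith

open MeasureTheory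

lemma integrable_of_bounded_meas {Ω : Type*} [MeasurableSpace Ω] {ν : Measure Ω}
    [IsFiniteMeasure ν] {f : Ω → ℝ} (hf : Measurable f) (C : ℝ) (hC : ∀ ω, |f ω| ≤ C) :
    Integrable f ν := by
  refine ⟨hf.aestronglyMeasurable, ?_⟩
  apply HasFiniteIntegral.of_bounded (C := C)
  exact ae_of_all _ (fun ω => by simpa [Real.norm_eq_abs] using hC ω)

lemma steinChen_finite {Ω : Type*} [MeasurableSpace Ω] (ν : Measure Ω) [IsProbabilityMeasure ν]
    (B : ℕ → Set Ω) (hmB : ∀ j, MeasurableSet (B j))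
    (hind : ProbabilityTheory.iIndepSet B ν) (n : ℕ) (A : Set ℕ)
    {r : ℝ} (hr : 0 ≤ r) (hp : ∀ j, (ν (B j)).toReal ≤ r) :
    |(ν {ω | (∑ j ∈ Finset.range n, (B j).indicator (fun _ => (1:ℕ)) ω) ∈ A}).toReal
      - PoSet A (∑ j ∈ Finset.range n, (ν (B j)).toReal)| ≤ r := by
  classical
  set I : ℕ → Ω → ℕ := fun j => (B j).indicator (fun _ => 1) with hI
  set p : ℕ → ℝ := fun j => (ν (B j)).toReal with hpdef
  set lam : ℝ := ∑ j ∈ Finset.range n, p j with hlamdef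
  have hp0 : ∀ j, 0 ≤ p j := fun j => ENNReal.toReal_nonneg
  have hlam0 : 0 ≤ lam := Finset.sum_nonneg fun j _ => hp0 j
  set W : Ω → ℕ := fun ω => ∑ j ∈ Finset.range n, I j ω with hW
  have hmI : ∀ j, Measurable (I j) := fun j => measurable_const.indicator (hmB j)
  have hmW : Measurable W := Finset.measurable_sum _ (fun j _ => hmI j)
  have hIle : ∀ j ω, I j ω ≤ 1 := by
    intro j ω
    by_cases h : ω ∈ B j <;> simp [hI, Set.indicator, h]
  have hWle : ∀ ω, W ω ≤ n := by
    intro ω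
    calc W ω ≤ ∑ _j ∈ Finset.range n, 1 := Finset.sum_le_sum (fun j _ => hIle j ω)
    _ = n := by simp
  have hmA : MeasurableSet A := (Set.to_countable A).measurableSet
  rcases eq_or_lt_of_le hlam0 with hlam | hlam
  · -- lam = 0
    have hzero : ∀ j ∈ Finset.range n, ν (B j) = 0 := by
      intro j hj
      have hpj : p j = 0 :=
        (Finset.sum_eq_zero_iff_of_nonneg (fun j _ => hp0 j)).1 hlam.symm j hj
      have := (ENNReal.toReal_eq_zero_iff _).1 hpj
      exact this.resolve_right (measure_ne_top ν _)
    have hUnull : ν (⋃ j ∈ Finset.range n, B j) = 0 := by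
      apply measure_biUnion_null_iff (Finset.countable_toSet _) |>.2
      exact fun j hj => hzero j hj
    have hWae : ∀ᵐ ω ∂ν, W ω = 0 := by
      rw [ae_iff]
      apply measure_mono_null _ hUnull
      intro ω hω
      simp only [Set.mem_setOf_eq] at hω
      by_contra hnot
      apply hω
      rw [hW]
      apply Finset.sum_eq_zero
      intro j hj
      have : ω ∉ B j := fun hmem => hnot (Set.mem_biUnion hj hmem)
      simp [hI, Set.indicator, this]
    have hseteq : {ω | W ω ∈ A} =ᵐ[ν] ({ω | (0:ℕ) ∈ A} : Set Ω) := by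
      rw [Filter.eventuallyEq_set]
      filter_upwards [hWae] with ω hω
      simp [hω]
    have hmeq : (ν {ω | W ω ∈ A}).toReal = A.indicator (fun _ => (1:ℝ)) 0 := by
      rw [measure_congr hseteq]
      by_cases h0 : (0:ℕ) ∈ A
      · have : ({ω | (0:ℕ) ∈ A} : Set Ω) = Set.univ := by
          ext ω; simp [h0]
        rw [this]
        simp [Set.indicator, h0]
      · have : ({ω | (0:ℕ) ∈ A} : Set Ω) = ∅ := by
          ext ω; simp [h0]
        rw [this]
        simp [Set.indicator, h0]
    rw [← hlam, PoSet_zero, hmeq]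
    simpa using hr
  · -- lam > 0
    set g : ℕ → ℝ := gg A lam with hg
    set C : ℝ := ∑ k ∈ Finset.range (n+3), |g k| with hC
    have hgC : ∀ m, m ≤ n+2 → |g m| ≤ C := fun m hm =>
      Finset.single_le_sum (f := fun k => |g k|) (fun k _ => abs_nonneg (g k))
        (Finset.mem_range.2 (by omega))
    set Woff : ℕ → Ω → ℕ := fun j ω => ∑ k ∈ (Finset.range n).erase j, I k ω with hWoff
    have hmWoff : ∀ j, Measurable (Woff j) := fun j =>
      Finset.measurable_sum _ (fun k _ => hmI k)
    have hWoffle : ∀ j ω, Woff j ω ≤ n := by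
      intro j ω
      calc Woff j ω ≤ ∑ _k ∈ (Finset.range n).erase j, 1 :=
            Finset.sum_le_sum (fun k _ => hIle k ω)
      _ ≤ n := by
          rw [Finset.sum_const, smul_eq_mul, mul_one]
          calc ((Finset.range n).erase j).card ≤ (Finset.range n).card :=
                Finset.card_le_card (Finset.erase_subset _ _)
          _ = n := Finset.card_range n
    have hWsplit : ∀ j ∈ Finset.range n, ∀ ω, W ω = Woff j ω + I j ω := by
      intro j hj ω
      rw [hW, hWoff]
      exact (Finset.sum_erase_add _ _ hj).symm
    -- integrability helpers
    have intg : ∀ (f : Ω → ℕ), Measurable f → (∀ ω, f ω ≤ n+2) →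
        Integrable (fun ω => g (f ω)) ν := by
      intro f hf hb
      exact integrable_of_bounded_meas (measurable_from_top.comp' hf) C
        (fun ω => hgC _ (hb ω))
    have intIg : ∀ (j : ℕ) (f : Ω → ℕ), Measurable f → (∀ ω, f ω ≤ n+2) →
        Integrable (fun ω => (I j ω : ℝ) * g (f ω)) ν := by
      intro j f hf hb
      apply integrable_of_bounded_meas
        ((measurable_from_top.comp' (hmI j) : Measurable fun ω => ((I j ω : ℕ):ℝ)).mul (measurable_from_top.comp' hf)) C
      intro ω
      simp only [Pi.mul_apply]
      rw [abs_mul]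
      calc |(I j ω : ℝ)| * |g (f ω)| ≤ 1 * C := by
            apply mul_le_mul _ (hgC _ (hb ω)) (abs_nonneg _) zero_le_one
            rw [abs_of_nonneg (by positivity)]
            exact_mod_cast hIle j ω
      _ = C := one_mul C
    -- Step A
    have hmWA : MeasurableSet {ω | W ω ∈ A} := hmW hmA
    have hintInd : Integrable (Set.indicator {ω | W ω ∈ A} (fun _ => (1:ℝ))) ν :=
      (integrable_const (1:ℝ)).indicator hmWA
    have stepA : (ν {ω | W ω ∈ A}).toReal - PoSet A lam = ∫ ω, fA A lam (W ω) ∂ν := by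
      have e1 : ∀ ω, fA A lam (W ω)
          = Set.indicator {ω' | W ω' ∈ A} (fun _ => (1:ℝ)) ω - PoSet A lam := by
        intro ω
        unfold fA
        by_cases h : W ω ∈ A
        · rw [Set.indicator_of_mem h, Set.indicator_of_mem (show ω ∈ {ω' | W ω' ∈ A} from h)]
        · rw [Set.indicator_of_notMem h,
            Set.indicator_of_notMem (show ω ∉ {ω' | W ω' ∈ A} from h)]
      simp only [e1]
      rw [integral_sub hintInd (integrable_const _), integral_const,
        integral_indicator_const _ hmWA]
      simp [measure_univ]
      rfl
    -- Step B+C: Stein identity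
    have stepB : ∫ ω, fA A lam (W ω) ∂ν
        = lam * (∫ ω, g (W ω + 1) ∂ν) - ∫ ω, (W ω : ℝ) * g (W ω) ∂ν := by
      have e1 : ∀ ω, fA A lam (W ω) = lam * g (W ω + 1) - (W ω : ℝ) * g (W ω) := by
        intro ω
        exact (stein_identity A hlam.ne' (W ω)).symm
      simp only [e1]
      rw [integral_sub ((intg _ (hmW.add_const 1) (fun ω => by have := hWle ω; omega)).const_mul lam)]
      · rw [MeasureTheory.integral_const_mul]
      · apply integrable_of_bounded_meas
          ((measurable_from_top.comp' hmW).mul (measurable_from_top.comp' hmW)) ((n:ℝ) * C)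
        intro ω
        simp only [Pi.mul_apply]
        rw [abs_mul]
        apply mul_le_mul
        · rw [abs_of_nonneg (by positivity)]
          exact_mod_cast hWle ω
        · exact hgC _ (by have := hWle ω; omega)
        · exact abs_nonneg _
        · exact Nat.cast_nonneg n
    -- ∫ (I j : ℝ) = p j
    have hQ : ∀ j, ∫ ω, (I j ω : ℝ) ∂ν = p j := by
      intro j
      have e : (fun ω => ((I j ω:ℕ):ℝ)) = (B j).indicator (fun _ => (1:ℝ)) := by
        funext ω
        by_cases h : ω ∈ B j <;> simp [hI, Set.indicator, h]
      rw [e, integral_indicator_const _ (hmB j)]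
      simp [hpdef]
      rfl
    have intI : ∀ j, Integrable (fun ω => (I j ω : ℝ)) ν := fun j =>
      integrable_of_bounded_meas (measurable_from_top.comp' (hmI j)) 1
        (fun ω => by rw [abs_of_nonneg (by positivity)]; exact_mod_cast hIle j ω)
    -- Step D
    have intWg : ∀ j, Integrable (fun ω => (I j ω : ℝ) * g (W ω)) ν := fun j =>
      intIg j W hmW (fun ω => by have := hWle ω; omega)
    have stepD : ∫ ω, (W ω : ℝ) * g (W ω) ∂ν
        = ∑ j ∈ Finset.range n, ∫ ω, (I j ω : ℝ) * g (W ω) ∂ν := by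
      rw [← integral_finset_sum _ (fun j _ => intWg j)]
      congr 1
      funext ω
      rw [← Finset.sum_mul]
      congr 1
      show ((∑ j ∈ Finset.range n, I j ω : ℕ) : ℝ) = _
      push_cast
      rfl
    -- Steps E & F
    have stepEF : ∀ j ∈ Finset.range n, ∫ ω, (I j ω : ℝ) * g (W ω) ∂ν
        = p j * ∫ ω, g (Woff j ω + 1) ∂ν := by
      intro j hj
      have hE : (fun ω => (I j ω : ℝ) * g (W ω))
          = fun ω => (I j ω : ℝ) * g (Woff j ω + 1) := by
        funext ω
        by_cases h : ω ∈ B j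
        · have hI1 : I j ω = 1 := by simp [hI, Set.indicator, h]
          rw [hWsplit j hj ω, hI1]
        · have hI0 : I j ω = 0 := by simp [hI, Set.indicator, h]
          rw [hI0]; push_cast; ring
      rw [hE]
      have hiInd : ProbabilityTheory.iIndepFun I ν :=
        ProbabilityTheory.iIndepSet.iIndepFun_indicator hind
      have hIndep0 : ProbabilityTheory.IndepFun
          (∑ k ∈ (Finset.range n).erase j, I k) (I j) ν :=
        ProbabilityTheory.iIndepFun.indepFun_finsetSum_of_notMem hiInd hmI
          (Finset.notMem_erase j _)
      have hIndep : ProbabilityTheory.IndepFun (Woff j) (I j) ν := by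
        have e : Woff j = ∑ k ∈ (Finset.range n).erase j, I k := by
          funext ω
          rw [hWoff]
          simp [Finset.sum_apply]
        rw [e]
        exact hIndep0
      have hIF0 : ProbabilityTheory.IndepFun ((fun k : ℕ => (k:ℝ)) ∘ I j)
          ((fun k : ℕ => g (k+1)) ∘ Woff j) ν :=
        ProbabilityTheory.IndepFun.comp hIndep.symm
          (measurable_from_top (f := fun k : ℕ => (k:ℝ)))
          (measurable_from_top (f := fun k : ℕ => g (k+1)))
      have hIF : ProbabilityTheory.IndepFun (fun ω => ((I j ω : ℕ) : ℝ))
          (fun ω => g (Woff j ω + 1)) ν := hIF0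
      have hmul := hIF.integral_mul_eq_mul_integral (intI j).aestronglyMeasurable
        (intg _ ((hmWoff j).add_const 1) (fun ω => by have := hWoffle j ω; omega)).aestronglyMeasurable
      have hPi : (fun ω => ((I j ω:ℕ):ℝ)) * (fun ω => g (Woff j ω + 1))
          = fun ω => (I j ω : ℝ) * g (Woff j ω + 1) := rfl
      rw [hPi] at hmul
      rw [hmul, hQ j]
    -- assemble
    have intgW1 : Integrable (fun ω => g (W ω + 1)) ν :=
      intg _ (hmW.add_const 1) (fun ω => by have := hWle ω; omega)
    have intgWoff : ∀ j, Integrable (fun ω => g (Woff j ω + 1)) ν := fun j =>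
      intg _ ((hmWoff j).add_const 1) (fun ω => by have := hWoffle j ω; omega)
    have diff_eq : (ν {ω | W ω ∈ A}).toReal - PoSet A lam
        = ∑ j ∈ Finset.range n,
            p j * ∫ ω, (g (W ω + 1) - g (Woff j ω + 1)) ∂ν := by
      rw [stepA, stepB, stepD]
      rw [Finset.sum_congr rfl stepEF, hlamdef, Finset.sum_mul, ← Finset.sum_sub_distrib]
      refine Finset.sum_congr rfl fun j hj => ?_
      rw [integral_sub intgW1 (intgWoff j), mul_sub]
    have bound_j : ∀ j ∈ Finset.range n,
        |p j * ∫ ω, (g (W ω + 1) - g (Woff j ω + 1)) ∂ν| ≤ p j * (r / lam) := by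
      intro j hj
      rw [abs_mul, abs_of_nonneg (hp0 j)]
      have hptwise : ∀ ω, |g (W ω + 1) - g (Woff j ω + 1)| ≤ (I j ω : ℝ) * (1/lam) := by
        intro ω
        by_cases h : ω ∈ B j
        · have hI1 : I j ω = 1 := by simp [hI, Set.indicator, h]
          have hsplit := hWsplit j hj ω
          rw [hsplit, hI1]
          have := gg_increment A hlam (Woff j ω)
          simpa using this
        · have hI0 : I j ω = 0 := by simp [hI, Set.indicator, h]
          have hsplit := hWsplit j hj ω
          rw [hsplit, hI0]
          simp
      have habs : |∫ ω, (g (W ω + 1) - g (Woff j ω + 1)) ∂ν|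
          ≤ ∫ ω, (I j ω : ℝ) * (1/lam) ∂ν := by
        calc |∫ ω, (g (W ω + 1) - g (Woff j ω + 1)) ∂ν|
            ≤ ∫ ω, |g (W ω + 1) - g (Woff j ω + 1)| ∂ν := by
              simpa [Real.norm_eq_abs] using
                MeasureTheory.norm_integral_le_integral_norm
                  (fun ω => g (W ω + 1) - g (Woff j ω + 1)) (μ := ν)
        _ ≤ ∫ ω, (I j ω : ℝ) * (1/lam) ∂ν := by
              apply integral_mono (intgW1.sub (intgWoff j)).abs
                ((intI j).mul_const _) hptwise
      have hInt1 : ∫ ω, (I j ω : ℝ) * (1/lam) ∂ν = p j * (1/lam) := by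
        rw [integral_mul_const, hQ j]
      rw [hInt1] at habs
      calc p j * |∫ ω, (g (W ω + 1) - g (Woff j ω + 1)) ∂ν|
          ≤ p j * (p j * (1/lam)) := mul_le_mul_of_nonneg_left habs (hp0 j)
      _ ≤ p j * (r / lam) := by
          apply mul_le_mul_of_nonneg_left _ (hp0 j)
          rw [div_eq_mul_one_div r lam]
          exact mul_le_mul_of_nonneg_right (hp j) (by positivity)
    calc |(ν {ω | W ω ∈ A}).toReal - PoSet A lam|
        = |∑ j ∈ Finset.range n,
            p j * ∫ ω, (g (W ω + 1) - g (Woff j ω + 1)) ∂ν| := by rw [diff_eq]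
    _ ≤ ∑ j ∈ Finset.range n,
          |p j * ∫ ω, (g (W ω + 1) - g (Woff j ω + 1)) ∂ν| :=
        Finset.abs_sum_le_sum_abs _ _
    _ ≤ ∑ j ∈ Finset.range n, p j * (r / lam) := Finset.sum_le_sum bound_j
    _ = lam * (r / lam) := by rw [← Finset.sum_mul, hlamdef]
    _ = r := by field_simp

lemma nat_eq_of_abs_cast_lt {a b : ℕ} (h : |(a:ℝ) - (b:ℝ)| < 1) : a = b := by
  rcases le_total a b with hab | hab
  · have h1 : |(a:ℝ) - (b:ℝ)| = ((b - a : ℕ) : ℝ) := by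
      rw [abs_sub_comm, Nat.cast_sub hab, abs_of_nonneg (by
        have : (a:ℝ) ≤ (b:ℝ) := Nat.cast_le.2 hab
        linarith)]
    rw [h1] at h
    have : b - a = 0 := by exact_mod_cast Nat.cast_lt_one.1 h
    omega
  · have h1 : |(a:ℝ) - (b:ℝ)| = ((a - b : ℕ) : ℝ) := by
      rw [Nat.cast_sub hab, abs_of_nonneg (by
        have : (b:ℝ) ≤ (a:ℝ) := Nat.cast_le.2 hab
        linarith)]
    rw [h1] at h
    have : a - b = 0 := by exact_mod_cast Nat.cast_lt_one.1 h
    omega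

lemma steinChen_measure {Ω : Type*} [MeasurableSpace Ω] (ν : Measure Ω) [IsProbabilityMeasure ν]
    (B : ℕ → Set Ω) (hmB : ∀ j, MeasurableSet (B j))
    (hind : ProbabilityTheory.iIndepSet B ν)
    (s : Ω → ℕ) (hsmeas : Measurable s)
    (hs : ∀ᵐ ω ∂ν, HasSum (fun j => (B j).indicator (fun _ => (1 : ℝ)) ω) ((s ω : ℝ)))
    (hsint : Integrable (fun ω => (s ω : ℝ)) ν)
    {r : ℝ} (hr : 0 ≤ r) (hp : ∀ j, (ν (B j)).toReal ≤ r) (A : Set ℕ) :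
    |(ν {ω | s ω ∈ A}).toReal - PoSet A (∫ ω, (s ω : ℝ) ∂ν)| ≤ r := by
  classical
  set I : ℕ → Ω → ℕ := fun j => (B j).indicator (fun _ => 1) with hI
  set W : ℕ → Ω → ℕ := fun n ω => ∑ j ∈ Finset.range n, I j ω with hW
  set p : ℕ → ℝ := fun j => (ν (B j)).toReal with hpdef
  set lamn : ℕ → ℝ := fun n => ∑ j ∈ Finset.range n, p j with hlamn
  set Lam : ℝ := ∫ ω, (s ω : ℝ) ∂ν with hLam
  have hmI : ∀ j, Measurable (I j) := fun j => measurable_const.indicator (hmB j)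
  have hmW : ∀ n, Measurable (W n) := fun n => Finset.measurable_sum _ (fun j _ => hmI j)
  have hmA : MeasurableSet A := (Set.to_countable A).measurableSet
  have hcast : ∀ j ω, ((I j ω : ℕ) : ℝ) = (B j).indicator (fun _ => (1:ℝ)) ω := by
    intro j ω
    by_cases h : ω ∈ B j <;> simp [hI, Set.indicator, h]
  have hae : ∀ᵐ ω ∂ν, HasSum (fun j => ((I j ω : ℕ):ℝ)) ((s ω : ℝ)) := by
    filter_upwards [hs] with ω h
    have e : (fun j => ((I j ω : ℕ):ℝ)) = fun j => (B j).indicator (fun _ => (1:ℝ)) ω :=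
      funext fun j => hcast j ω
    rw [e]
    exact h
  have hWcast : ∀ n ω, ((W n ω : ℕ) : ℝ) = ∑ j ∈ Finset.range n, ((I j ω : ℕ):ℝ) := by
    intro n ω
    rw [hW]
    push_cast
    rfl
  have haeT : ∀ᵐ ω ∂ν, Filter.Tendsto (fun n => ((W n ω : ℕ):ℝ))
      Filter.atTop (nhds ((s ω : ℝ))) := by
    filter_upwards [hae] with ω h
    have := h.tendsto_sum_nat
    refine this.congr fun n => ?_
    rw [hWcast]
  have haeEq : ∀ᵐ ω ∂ν, ∀ᶠ n in Filter.atTop, W n ω = s ω := by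
    filter_upwards [haeT] with ω h
    obtain ⟨N, hN⟩ := Metric.tendsto_atTop.1 h 1 one_pos
    refine Filter.eventually_atTop.2 ⟨N, fun n hn => ?_⟩
    exact nat_eq_of_abs_cast_lt (by simpa [Real.dist_eq] using hN n hn)
  have hWle_s : ∀ᵐ ω ∂ν, ∀ n, ((W n ω : ℕ):ℝ) ≤ ((s ω : ℕ):ℝ) := by
    filter_upwards [hae] with ω h
    intro n
    rw [hWcast]
    exact sum_le_hasSum (Finset.range n) (fun j _ => by positivity) h
  have hQ : ∀ j, ∫ ω, ((I j ω : ℕ) : ℝ) ∂ν = p j := by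
    intro j
    have e : (fun ω => ((I j ω:ℕ):ℝ)) = (B j).indicator (fun _ => (1:ℝ)) :=
      funext fun ω => hcast j ω
    rw [e, integral_indicator_const _ (hmB j)]
    simp [hpdef]
    rfl
  have hIle : ∀ j ω, I j ω ≤ 1 := by
    intro j ω
    by_cases h : ω ∈ B j <;> simp [hI, Set.indicator, h]
  have intI : ∀ j, Integrable (fun ω => ((I j ω : ℕ): ℝ)) ν := fun j =>
    integrable_of_bounded_meas (measurable_from_top.comp' (hmI j)) 1
      (fun ω => by rw [abs_of_nonneg (by positivity)]; exact_mod_cast hIle j ω)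
  have intW : ∀ n, Integrable (fun ω => ((W n ω : ℕ): ℝ)) ν := by
    intro n
    apply integrable_of_bounded_meas (measurable_from_top.comp' (hmW n)) (n:ℝ)
    intro ω
    rw [abs_of_nonneg (by positivity)]
    have : W n ω ≤ n := by
      calc W n ω ≤ ∑ _j ∈ Finset.range n, 1 := Finset.sum_le_sum (fun j _ => hIle j ω)
      _ = n := by simp
    exact_mod_cast this
  have hlamn_int : ∀ n, lamn n = ∫ ω, ((W n ω : ℕ):ℝ) ∂ν := by
    intro n
    rw [show (fun ω => ((W n ω : ℕ):ℝ)) = fun ω => ∑ j ∈ Finset.range n, ((I j ω:ℕ):ℝ)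
      from funext fun ω => hWcast n ω]
    rw [integral_finset_sum _ (fun j _ => intI j)]
    rw [hlamn]
    exact (Finset.sum_congr rfl fun j _ => (hQ j).symm)
  have hlam_tendsto : Filter.Tendsto lamn Filter.atTop (nhds Lam) := by
    have := MeasureTheory.tendsto_integral_of_dominated_convergence
      (F := fun n ω => ((W n ω : ℕ):ℝ)) (f := fun ω => ((s ω:ℕ):ℝ))
      (bound := fun ω => ((s ω:ℕ):ℝ)) (μ := ν)
      (fun n => (measurable_from_top.comp' (hmW n)).aestronglyMeasurable)
      hsint
      (fun n => by
        filter_upwards [hWle_s] with ω h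
        rw [Real.norm_eq_abs, abs_of_nonneg (by positivity)]
        exact h n)
      haeT
    refine this.congr fun n => (hlamn_int n).symm
  have hlamn0 : ∀ n, 0 ≤ lamn n := fun n =>
    Finset.sum_nonneg fun j _ => ENNReal.toReal_nonneg
  have hlamn_le : ∀ n, lamn n ≤ Lam := by
    intro n
    rw [hlamn_int n, hLam]
    exact integral_mono_ae (intW n) hsint (hWle_s.mono fun ω h => h n)
  have hLam0 : 0 ≤ Lam := le_of_tendsto_of_tendsto' tendsto_const_nhds hlam_tendsto hlamn0
  have hPo_tendsto : Filter.Tendsto (fun n => PoSet A (lamn n)) Filter.atTop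
      (nhds (PoSet A Lam)) := by
    simp only [PoSet_eq_tsum]
    apply tendsto_tsum_of_dominated_convergence (bound := fun k => q Lam k) (summable_q Lam)
    · intro k
      by_cases hk : k ∈ A
      · simp only [Set.indicator_of_mem hk]
        have hcont : Continuous fun x : ℝ => Po k x := by
          unfold Po
          exact ((continuous_pow k).mul (Real.continuous_exp.comp continuous_neg)).div_const _
        exact (hcont.tendsto Lam).comp hlam_tendsto
      · simp only [Set.indicator_of_notMem hk]
        exact tendsto_const_nhds
    · refine Filter.Eventually.of_forall fun n k => ?_
      have hPo : ∀ x : ℝ, 0 ≤ x → x ≤ Lam → |Po k x| ≤ q Lam k := by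
        intro x hx hxL
        rw [abs_of_nonneg (Po_nonneg hx k), Po_eq]
        calc q x k * Real.exp (-x) ≤ q x k * 1 := by
              apply mul_le_mul_of_nonneg_left _ (q_nonneg hx k)
              exact Real.exp_le_one_iff.2 (by linarith)
        _ = q x k := mul_one _
        _ ≤ q Lam k := by
              unfold q
              have hfac : (0:ℝ) < (Nat.factorial k : ℝ) :=
                Nat.cast_pos.2 (Nat.factorial_pos k)
              exact (div_le_div_iff_of_pos_right hfac).2 (pow_le_pow_left₀ hx hxL k)
      by_cases hk : k ∈ A
      · rw [Set.indicator_of_mem hk, Real.norm_eq_abs]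
        exact hPo (lamn n) (hlamn0 n) (hlamn_le n)
      · rw [Set.indicator_of_notMem hk]
        simpa using q_nonneg hLam0 k
  have hP_tendsto : Filter.Tendsto (fun n => (ν {ω | W n ω ∈ A}).toReal) Filter.atTop
      (nhds ((ν {ω | s ω ∈ A}).toReal)) := by
    have hms : MeasurableSet {ω | s ω ∈ A} := hsmeas hmA
    have hmWn : ∀ n, MeasurableSet {ω | W n ω ∈ A} := fun n => hmW n hmA
    have key := MeasureTheory.tendsto_integral_of_dominated_convergence
      (F := fun n => Set.indicator {ω | W n ω ∈ A} (fun _ => (1:ℝ)))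
      (f := Set.indicator {ω | s ω ∈ A} (fun _ => (1:ℝ)))
      (bound := fun _ => (1:ℝ)) (μ := ν)
      (fun n => ((integrable_const (1:ℝ)).indicator (hmWn n)).aestronglyMeasurable)
      (integrable_const 1)
      (fun n => Filter.Eventually.of_forall fun ω => by
        by_cases h : W n ω ∈ A <;> simp [Set.indicator_apply, Set.mem_setOf_eq, h])
      (by
        filter_upwards [haeEq] with ω h
        apply Filter.Tendsto.congr' _ tendsto_const_nhds
        filter_upwards [h] with n hn
        simp only [Set.indicator_apply, Set.mem_setOf_eq, hn])
    have e1 : ∀ n, ∫ ω, Set.indicator {ω' | W n ω' ∈ A} (fun _ => (1:ℝ)) ω ∂ν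
        = (ν {ω | W n ω ∈ A}).toReal := by
      intro n
      rw [integral_indicator_const _ (hmWn n)]
      simp
      rfl
    have e2 : ∫ ω, Set.indicator {ω' | s ω' ∈ A} (fun _ => (1:ℝ)) ω ∂ν
        = (ν {ω | s ω ∈ A}).toReal := by
      rw [integral_indicator_const _ hms]
      simp
      rfl
    rw [← e2]
    exact key.congr fun n => e1 n
  have hbound : ∀ n, |(ν {ω | W n ω ∈ A}).toReal - PoSet A (lamn n)| ≤ r := by
    intro n
    exact steinChen_finite ν B hmB hind n A hr hp
  have habs : Filter.Tendsto
      (fun n => |(ν {ω | W n ω ∈ A}).toReal - PoSet A (lamn n)|) Filter.atTop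
      (nhds (|(ν {ω | s ω ∈ A}).toReal - PoSet A Lam|)) :=
    (hP_tendsto.sub hPo_tendsto).abs
  exact le_of_tendsto habs (Filter.Eventually.of_forall hbound)

end LSN

open LSN in
/-- Infinite sum law of small numbers (Theorem 4.13, scalar instance): for a sequence
(B_j) of events conditionally independent given 𝓖 with s = Σ_{j=0}^∞ 1_{B_j} integrable
(in particular finite a.e.), H a nonnegative version of E[s|𝓖] and h_j versions of
P[B_j|𝓖] with 0 ≤ h_j ≤ 1, for every A ⊆ ℕ,
|P[{s ∈ A}|𝓖] - Po(A;H)| ≤ sup_j h_j almost everywhere. -/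
theorem lawOfSmallNumbers_infinite
    {Ω : Type*} (𝓖 : MeasurableSpace Ω) [mΩ : MeasurableSpace Ω] [StandardBorelSpace Ω]
    (h𝓖 : 𝓖 ≤ mΩ)
    (μ : Measure Ω) [IsProbabilityMeasure μ]
    (B : ℕ → Set Ω) (hBmeas : ∀ j, MeasurableSet (B j))
    (hBindep : ProbabilityTheory.iCondIndepSet 𝓖 h𝓖 B μ)
    (s : Ω → ℕ) (hsmeas : Measurable s)
    (hs : ∀ᵐ ω ∂μ, HasSum (fun j => (B j).indicator (fun _ => (1 : ℝ)) ω) ((s ω : ℝ)))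
    (hsint : Integrable (fun ω => (s ω : ℝ)) μ)
    (H : Ω → ℝ) (hH0 : ∀ ω, 0 ≤ H ω)
    (hH : H =ᵐ[μ] μ[fun ω => (s ω : ℝ) | 𝓖])
    (h : ℕ → Ω → ℝ) (hh01 : ∀ j ω, 0 ≤ h j ω ∧ h j ω ≤ 1)
    (hh : ∀ j, h j =ᵐ[μ] μ[(B j).indicator (fun _ => (1 : ℝ)) | 𝓖])
    (A : Set ℕ) :
    ∀ᵐ ω ∂μ,
      |(μ[Set.indicator {ω' | s ω' ∈ A} (fun _ => (1 : ℝ)) | 𝓖]) ω - PoSet A (H ω)|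
        ≤ ⨆ j, h j ω := by
  classical
  set κ := ProbabilityTheory.condExpKernel μ 𝓖 with hκ
  have hmA : MeasurableSet A := (Set.to_countable A).measurableSet
  have hms : MeasurableSet {ω' | s ω' ∈ A} := hsmeas hmA
  -- (2) conditional probability of the target event
  have hL : μ[Set.indicator {ω' | s ω' ∈ A} (fun _ => (1 : ℝ)) | 𝓖]
      =ᵐ[μ] fun ω => (κ ω {ω' | s ω' ∈ A}).toReal :=
    (ProbabilityTheory.condExpKernel_ae_eq_condExp h𝓖 hms).symm
  -- (3) H as an integral against the kernel
  have hHa : H =ᵐ[μ] fun ω => ∫ y, (s y : ℝ) ∂(κ ω) :=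
    hH.trans (ProbabilityTheory.condExp_ae_eq_integral_condExpKernel h𝓖 hsint)
  -- (4) h j as kernel probabilities
  have hhj : ∀ᵐ ω ∂μ, ∀ j, h j ω = (κ ω (B j)).toReal := by
    rw [MeasureTheory.ae_all_iff]
    intro j
    exact (hh j).trans (ProbabilityTheory.condExpKernel_ae_eq_condExp h𝓖 (hBmeas j)).symm
  -- (5) independence under the kernel
  have hindep : ∀ᵐ ω ∂μ, ProbabilityTheory.iIndepSet B (κ ω) := by
    have hcis := (ProbabilityTheory.iCondIndepSet_iff_iCondIndepSets_singleton
      𝓖 h𝓖 B hBmeas μ).1 hBindep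
    have hKsets : ProbabilityTheory.Kernel.iIndepSets (fun i => {B i}) κ (μ.trim h𝓖) := hcis
    have hsets : ∀ S : Finset ℕ, ∀ᵐ ω ∂(μ.trim h𝓖),
        κ ω (⋂ i ∈ S, B i) = ∏ i ∈ S, κ ω (B i) := fun S => hKsets S (fun i _ => rfl)
    have hall : ∀ᵐ ω ∂(μ.trim h𝓖), ∀ S : Finset ℕ,
        κ ω (⋂ i ∈ S, B i) = ∏ i ∈ S, κ ω (B i) := (MeasureTheory.ae_all_iff).2 hsets
    have hall' := ae_of_ae_trim h𝓖 hall
    filter_upwards [hall'] with ω hω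
    exact (ProbabilityTheory.iIndepSet_iff_meas_biInter hBmeas).2 hω
  -- (6) HasSum transfer
  set T : Set Ω := toMeasurable μ {ω | ¬ HasSum (fun j => (B j).indicator (fun _ => (1 : ℝ)) ω)
    ((s ω : ℝ))} with hT
  have hTnull : μ T = 0 := by
    rw [hT, measure_toMeasurable]
    exact hs
  have hTsub : ∀ y, y ∉ T →
      HasSum (fun j => (B j).indicator (fun _ => (1 : ℝ)) y) ((s y : ℝ)) := by
    intro y hy
    by_contra hny
    exact hy (subset_toMeasurable μ _ hny)
  have hTker : ∀ᵐ ω ∂μ, κ ω T = 0 := by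
    have hind_zero : Set.indicator T (fun _ => (1:ℝ)) =ᵐ[μ] (fun _ => (0:ℝ)) := by
      have : ∀ᵐ ω ∂μ, ω ∉ T := by
        rw [ae_iff]
        simpa [Set.setOf_mem_eq] using hTnull
      filter_upwards [this] with ω hω
      rw [Set.indicator_of_notMem hω]
    have hce : μ[Set.indicator T (fun _ => (1:ℝ)) | 𝓖] =ᵐ[μ] fun _ => (0:ℝ) := by
      calc μ[Set.indicator T (fun _ => (1:ℝ)) | 𝓖]
          =ᵐ[μ] μ[(fun _ => (0:ℝ)) | 𝓖] := condExp_congr_ae hind_zero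
      _ =ᵐ[μ] fun _ => (0:ℝ) := by
          rw [show (fun _ : Ω => (0:ℝ)) = (0 : Ω → ℝ) from rfl, condExp_zero]
    have hker := (ProbabilityTheory.condExpKernel_ae_eq_condExp h𝓖
      (measurableSet_toMeasurable μ _)).trans hce
    filter_upwards [hker] with ω hω
    have hfin : κ ω T ≠ ⊤ := measure_ne_top _ _
    have : (κ ω T).toReal = 0 := hω
    exact (ENNReal.toReal_eq_zero_iff _).1 this |>.resolve_right hfin
  have hsker : ∀ᵐ ω ∂μ, ∀ᵐ y ∂(κ ω),
      HasSum (fun j => (B j).indicator (fun _ => (1 : ℝ)) y) ((s y : ℝ)) := by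
    filter_upwards [hTker] with ω hω
    rw [ae_iff]
    apply measure_mono_null _ hω
    intro y hy
    simp only [Set.mem_setOf_eq] at hy
    by_contra hyT
    exact hy (hTsub y hyT)
  -- (7) integrability transfer
  have hintker : ∀ᵐ ω ∂μ, Integrable (fun y => (s y : ℝ)) (κ ω) :=
    hsint.condExpKernel_ae
  -- conclusion
  filter_upwards [hL, hHa, hhj, hindep, hsker, hintker] with ω hLω hHω hhω hindω hsω hintω
  haveI : IsProbabilityMeasure (κ ω) := by
    have : ProbabilityTheory.IsMarkovKernel κ := by infer_instance
    exact this.isProbabilityMeasure ω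
  have hbdd : BddAbove (Set.range fun j => h j ω) := by
    refine ⟨1, ?_⟩
    rintro x ⟨j, rfl⟩
    exact (hh01 j ω).2
  have hr0 : 0 ≤ ⨆ j, h j ω := le_trans (hh01 0 ω).1 (le_ciSup hbdd 0)
  have hp : ∀ j, (κ ω (B j)).toReal ≤ ⨆ j, h j ω := by
    intro j
    rw [← hhω j]
    exact le_ciSup hbdd j
  rw [hLω, hHω]
  exact steinChen_measure (κ ω) B hBmeas hindω s hsmeas hsω hintω hr0 hp A
end

section
/- (Unconditional Stein–Chen bound.) Let B_0,…,B_n be mutually independent events in a probability space (Ω, 𝓕, ℙ), set W := Σ_{i=0}^{n} 1_{B_i} and λ := Σ_{i=0}^{n} ℙ(B_i). Then for every A ⊆ ℕ: |ℙ({W ∈ A}) − Po(A;λ)| ≤ max_{0≤i≤n} ℙ(B_i). -/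
open scoped BigOperators

open MeasureTheory

/-!
Stein's method. The function `g = steinChen · λ A` solves the Stein equation
`1_A(k) - Po(A;λ) = λ g(k+1) - k g(k)`, so `ℙ(W ∈ A) - Po(A;λ) = 𝔼[λ g(W+1) - W g(W)]`.
Writing `W = V_i + 1_{B_i}`, where `V_i = ∑_{j ≠ i} 1_{B_j}` is independent of `B_i`, and
`p_i = ℙ(B_i)`, this expectation equals `∑ i, p_i² 𝔼[g(V_i+2) - g(V_i+1)]`. The closed form
`λ^(j+1)/j! · g(j+1) = ∑_{m ≤ j} (1_A(m) - Po(A;λ)) λ^m/m!`, together with the inequalities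
`λ S_j ≤ (j+1) S_{j+1}` and `(j+1) R_{j+1} ≤ λ R_j` for the head sums `S_j = ∑_{m ≤ j} λ^m/m!`
and tails `R_j = ∑_{m > j} λ^m/m!` of the exponential series, gives `λ |g(j+2) - g(j+1)| ≤ 1`,
and then `∑ i, p_i²/λ ≤ max_i p_i`.
-/

open ProbabilityTheory Finset

namespace SteinChen

noncomputable def poissonWeight (lam : ℝ) (m : ℕ) : ℝ := lam ^ m / m.factorial

noncomputable def headSum (A : Set ℕ) (lam : ℝ) (j : ℕ) : ℝ :=
  ∑ m ∈ range (j + 1), A.indicator (poissonWeight lam) m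

noncomputable def tailSum (A : Set ℕ) (lam : ℝ) (j : ℕ) : ℝ :=
  ∑' m, A.indicator (poissonWeight lam) (m + (j + 1))

variable {lam : ℝ}

lemma poissonWeight_nonneg (hl : 0 ≤ lam) (m : ℕ) : 0 ≤ poissonWeight lam m := by
  unfold poissonWeight; positivity

lemma mul_poissonWeight (lam : ℝ) (m : ℕ) :
    lam * poissonWeight lam m = (m + 1) * poissonWeight lam (m + 1) := by
  unfold poissonWeight
  rw [Nat.factorial_succ, pow_succ]
  push_cast
  field_simp

lemma hasSum_poissonWeight (lam : ℝ) : HasSum (poissonWeight lam) (Real.exp lam) :=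
  Real.exp_eq_exp_ℝ ▸ NormedSpace.expSeries_div_hasSum_exp lam

lemma indicator_poissonWeight_nonneg (hl : 0 ≤ lam) (A : Set ℕ) (m : ℕ) :
    0 ≤ A.indicator (poissonWeight lam) m :=
  Set.indicator_nonneg (fun m _ => poissonWeight_nonneg hl m) m

lemma indicator_poissonWeight_le (hl : 0 ≤ lam) (A : Set ℕ) (m : ℕ) :
    A.indicator (poissonWeight lam) m ≤ poissonWeight lam m :=
  Set.indicator_le_self' (fun m _ => poissonWeight_nonneg hl m) m

lemma summable_indicator_poissonWeight (hl : 0 ≤ lam) (A : Set ℕ) :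
    Summable (A.indicator (poissonWeight lam)) :=
  (hasSum_poissonWeight lam).summable.of_nonneg_of_le (indicator_poissonWeight_nonneg hl A)
    (indicator_poissonWeight_le hl A)

lemma exp_mul_PoSet (lam : ℝ) (A : Set ℕ) :
    Real.exp lam * PoSet A lam = ∑' m, A.indicator (poissonWeight lam) m := by
  rw [PoSet, tsum_subtype A (Po · lam), ← tsum_mul_left]
  congr 1 with m
  by_cases hm : m ∈ A <;> simp [hm, Po, poissonWeight, Real.exp_neg]
  field_simp

lemma headSum_add_tailSum (hl : 0 ≤ lam) (A : Set ℕ) (j : ℕ) :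
    headSum A lam j + tailSum A lam j = ∑' m, A.indicator (poissonWeight lam) m :=
  (summable_indicator_poissonWeight hl A).sum_add_tsum_nat_add (j + 1)

lemma headSum_succ (A : Set ℕ) (lam : ℝ) (j : ℕ) :
    headSum A lam (j + 1) = headSum A lam j + A.indicator (poissonWeight lam) (j + 1) :=
  sum_range_succ _ _

lemma tailSum_eq_add_tailSum_succ (hl : 0 ≤ lam) (A : Set ℕ) (j : ℕ) :
    tailSum A lam j = A.indicator (poissonWeight lam) (j + 1) + tailSum A lam (j + 1) := by
  rw [tailSum, ((summable_nat_add_iff (j + 1)).2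
    (summable_indicator_poissonWeight hl A)).tsum_eq_zero_add, zero_add, tailSum]
  simp only [add_assoc, add_comm 1]

lemma headSum_nonneg (hl : 0 ≤ lam) (A : Set ℕ) (j : ℕ) : 0 ≤ headSum A lam j :=
  sum_nonneg fun m _ => indicator_poissonWeight_nonneg hl A m

lemma tailSum_nonneg (hl : 0 ≤ lam) (A : Set ℕ) (j : ℕ) : 0 ≤ tailSum A lam j :=
  tsum_nonneg fun _ => indicator_poissonWeight_nonneg hl A _

lemma headSum_le_headSum_univ (hl : 0 ≤ lam) (A : Set ℕ) (j : ℕ) :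
    headSum A lam j ≤ headSum Set.univ lam j := by
  rw [headSum, headSum, Set.indicator_univ]
  exact sum_le_sum fun m _ => indicator_poissonWeight_le hl A m

lemma tailSum_le_tailSum_univ (hl : 0 ≤ lam) (A : Set ℕ) (j : ℕ) :
    tailSum A lam j ≤ tailSum Set.univ lam j := by
  rw [tailSum, tailSum, Set.indicator_univ]
  exact ((summable_nat_add_iff (j + 1)).2 (summable_indicator_poissonWeight hl A)).tsum_le_tsum
    (fun m => indicator_poissonWeight_le hl A _)
    ((summable_nat_add_iff (j + 1)).2 (hasSum_poissonWeight lam).summable)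

lemma mul_headSum_univ_le (hl : 0 ≤ lam) (j : ℕ) :
    lam * headSum Set.univ lam j ≤ (j + 1) * headSum Set.univ lam (j + 1) := by
  simp only [headSum, Set.indicator_univ, mul_sum, mul_poissonWeight]
  rw [sum_range_succ' (fun m => (j + 1 : ℝ) * poissonWeight lam m)]
  refine le_add_of_le_of_nonneg (sum_le_sum fun m hm => ?_)
    (mul_nonneg (by positivity) (poissonWeight_nonneg hl 0))
  have : (m : ℝ) + 1 ≤ j + 1 := by exact_mod_cast Nat.succ_le_succ (mem_range_succ_iff.1 hm)
  exact mul_le_mul_of_nonneg_right this (poissonWeight_nonneg hl _)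

lemma mul_tailSum_univ_succ_le (hl : 0 ≤ lam) (j : ℕ) :
    (j + 1) * tailSum Set.univ lam (j + 1) ≤ lam * tailSum Set.univ lam j := by
  have hs : ∀ k, Summable fun m => poissonWeight lam (m + k) := fun k =>
    (summable_nat_add_iff k).2 (hasSum_poissonWeight lam).summable
  simp only [tailSum, Set.indicator_univ, ← tsum_mul_left]
  refine ((hs _).mul_left _).tsum_le_tsum (fun m => ?_) ((hs _).mul_left _)
  rw [mul_poissonWeight, show m + (j + 1) + 1 = m + (j + 1 + 1) by ring]
  refine mul_le_mul_of_nonneg_right ?_ (poissonWeight_nonneg hl _)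
  push_cast
  linarith [(m.cast_nonneg : (0 : ℝ) ≤ m)]

lemma PoSet_zero (A : Set ℕ) : PoSet A 0 = A.indicator 1 0 := by
  rw [← one_mul (PoSet A 0), ← Real.exp_zero, exp_mul_PoSet,
    tsum_eq_single 0 fun m hm => by simp [poissonWeight, hm]]
  by_cases h : 0 ∈ A <;> simp [h, poissonWeight]

/-- At `λ = 0`, where `λ⁻¹ = 0`, the equation holds because of the correction term of `steinChen`
and `Po(A;0) = 1_A(0)`. -/
lemma indicator_sub_PoSet_eq (lam : ℝ) (A : Set ℕ) (k : ℕ) :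
    A.indicator 1 k - PoSet A lam
      = lam * steinChen (k + 1) lam A - k * steinChen k lam A := by
  rcases eq_or_ne lam 0 with rfl | hl
  · cases k <;> simp [steinChen, PoSet_zero, Pi.one_def]
    field_simp
    ring
  · rw [steinChen, if_neg hl, mul_add, mul_inv_cancel_left₀ hl]
    simp only [Pi.one_def]
    ring

lemma mul_poissonWeight_mul_steinChen_succ (hl : lam ≠ 0) (A : Set ℕ) (j : ℕ) :
    lam * poissonWeight lam j * steinChen (j + 1) lam A
      = headSum A lam j - PoSet A lam * headSum Set.univ lam j := by
  induction j with
  | zero => by_cases h : 0 ∈ A <;> simp [steinChen, headSum, poissonWeight, hl, h]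
  | succ j ih =>
    have hw := mul_poissonWeight lam j
    rw [steinChen, if_neg hl, headSum_succ, headSum_succ, Set.indicator_univ]
    have hA : A.indicator (poissonWeight lam) (j + 1)
        = A.indicator (fun _ => 1) (j + 1) * poissonWeight lam (j + 1) := by
      rw [← Set.indicator_mul_left]; simp only [one_mul]
    rw [hA]
    simp only [mul_zero, zero_mul, add_zero]
    field_simp
    push_cast
    linear_combination ih - steinChen (j + 1) lam A * hw

/-- The core of the bound on the increments of `steinChen`: `ψ, S` are the head sums up to `j` of
`1_A(m) λ^m/m!` and of `λ^m/m!`, `b, a` their terms at `j + 1`, `τ, R` their tails beyond `j + 1`,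
`E = e^λ`, `P = Po(A;λ)`, `l = λ`, `n = j + 1`. Multiplied by `E`, the left side is affine in
`(ψ, τ, b)` with coefficients of fixed signs, hence bounded by its values at the corners of the box
`[0, S] × [0, R] × [0, a]`. -/
lemma abs_stein_increment_le {l n a b ψ τ S R P E : ℝ} (hl : 0 ≤ l) (hn : 0 ≤ n)
    (hψ : 0 ≤ ψ) (hψS : ψ ≤ S) (hτ : 0 ≤ τ) (hτR : τ ≤ R) (hb : 0 ≤ b) (hba : b ≤ a)
    (hR : n * R ≤ l * (a + R)) (hS : l * S ≤ n * (S + a))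
    (hE : S + a + R = E) (hP : E * P = ψ + b + τ) (hE0 : 0 < E) :
    |n * (ψ + b - P * (S + a)) - l * (ψ - P * S)| ≤ n * a := by
  subst hE
  have key : (S + a + R) * (n * (ψ + b - P * (S + a)) - l * (ψ - P * S))
      = ψ * (n * R - l * (a + R)) + τ * (l * S - n * (S + a)) + b * (n * R + l * S) := by
    linear_combination (l * S - n * (S + a)) * hP
  have hRS : 0 ≤ n * R + l * S :=
    add_nonneg (mul_nonneg hn (hτ.trans hτR)) (mul_nonneg hl (hψ.trans hψS))
  have h1 : ψ * (n * R - l * (a + R)) ≤ 0 := mul_nonpos_of_nonneg_of_nonpos hψ (by linarith)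
  have h2 : τ * (l * S - n * (S + a)) ≤ 0 := mul_nonpos_of_nonneg_of_nonpos hτ (by linarith)
  have h3 : b * (n * R + l * S) ≤ a * (n * R + l * S) := mul_le_mul_of_nonneg_right hba hRS
  have h4 : S * (n * R - l * (a + R)) ≤ ψ * (n * R - l * (a + R)) :=
    mul_le_mul_of_nonpos_right hψS (by linarith)
  have h5 : R * (l * S - n * (S + a)) ≤ τ * (l * S - n * (S + a)) :=
    mul_le_mul_of_nonpos_right hτR (by linarith)
  have h6 : 0 ≤ b * (n * R + l * S) := mul_nonneg hb hRS
  have h7 : a * (l * S) ≤ a * (n * (S + a)) := mul_le_mul_of_nonneg_left hS (hb.trans hba)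
  refine le_of_mul_le_mul_left ?_ hE0
  rw [← abs_of_pos hE0, ← abs_mul, key, abs_of_pos hE0, abs_le]
  constructor <;> linarith

lemma mul_abs_steinChen_succ_sub_le (hl : 0 ≤ lam) (A : Set ℕ) (j : ℕ) :
    lam * |steinChen (j + 2) lam A - steinChen (j + 1) lam A| ≤ 1 := by
  rcases hl.eq_or_lt with rfl | hl
  · simp
  have hsum := (hasSum_poissonWeight lam).tsum_eq
  have hg₁ := mul_poissonWeight_mul_steinChen_succ hl.ne' A j
  have hg₂ := mul_poissonWeight_mul_steinChen_succ hl.ne' A (j + 1)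
  have hw := mul_poissonWeight lam j
  have hE := headSum_add_tailSum hl.le Set.univ (j + 1)
  have hP := headSum_add_tailSum hl.le A (j + 1)
  have hR := mul_tailSum_univ_succ_le hl.le j
  have hS := mul_headSum_univ_le hl.le j
  rw [tailSum_eq_add_tailSum_succ hl.le Set.univ j] at hR
  rw [← exp_mul_PoSet] at hP
  simp only [headSum_succ, Set.indicator_univ] at hg₂ hE hP hR hS
  have hc : 0 < lam * poissonWeight lam j := by unfold poissonWeight; positivity
  have key := abs_stein_increment_le (n := j + 1) hl.le (by positivity)
    (headSum_nonneg hl.le A j) (headSum_le_headSum_univ hl.le A j)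
    (tailSum_nonneg hl.le A (j + 1)) (tailSum_le_tailSum_univ hl.le A (j + 1))
    (indicator_poissonWeight_nonneg hl.le A (j + 1)) (indicator_poissonWeight_le hl.le A (j + 1))
    hR hS (hE.trans hsum) hP.symm (Real.exp_pos lam)
  have hX : (j + 1) * (headSum A lam j + A.indicator (poissonWeight lam) (j + 1)
        - PoSet A lam * (headSum Set.univ lam j + poissonWeight lam (j + 1)))
      - lam * (headSum A lam j - PoSet A lam * headSum Set.univ lam j)
      = lam * poissonWeight lam j
        * (lam * (steinChen (j + 2) lam A - steinChen (j + 1) lam A)) := by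
    rw [← hg₁, ← hg₂]
    linear_combination (-lam * steinChen (j + 2) lam A) * hw
  rw [hX, abs_mul, abs_of_pos hc, ← hw] at key
  have h := le_of_mul_le_mul_left (key.trans (mul_one _).ge) hc
  rwa [abs_mul, abs_of_pos hl] at h

section EventCount

variable {Ω ι : Type*} {B : ι → Set Ω}

noncomputable def eventCount (B : ι → Set Ω) (s : Finset ι) (ω : Ω) : ℕ :=
  ∑ i ∈ s, (B i).indicator 1 ω

lemma eventCount_le_card (s : Finset ι) (ω : Ω) : eventCount B s ω ≤ s.card := by
  rw [card_eq_sum_ones]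
  exact sum_le_sum fun i _ => Set.indicator_le_self' (fun _ _ => zero_le_one) ω

lemma eventCount_eq_erase_add [DecidableEq ι] {s : Finset ι} {i : ι} (hi : i ∈ s) (ω : Ω) :
    eventCount B s ω = eventCount B (s.erase i) ω + (B i).indicator 1 ω :=
  (Finset.sum_erase_add s _ hi).symm

lemma indicator_mul_comp_eventCount [DecidableEq ι] {s : Finset ι} {i : ι} (hi : i ∈ s)
    (g : ℕ → ℝ) (ω : Ω) :
    ((B i).indicator 1 ω : ℕ) * g (eventCount B s ω)
      = (B i).indicator (fun ω => g (eventCount B (s.erase i) ω + 1)) ω := by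
  by_cases h : ω ∈ B i <;> simp [h, eventCount_eq_erase_add hi]

lemma comp_eventCount_sub_comp_erase [DecidableEq ι] {s : Finset ι} {i : ι} (hi : i ∈ s)
    (g : ℕ → ℝ) (ω : Ω) :
    g (eventCount B s ω) - g (eventCount B (s.erase i) ω)
      = (B i).indicator (fun ω => g (eventCount B (s.erase i) ω + 1)
          - g (eventCount B (s.erase i) ω)) ω := by
  by_cases h : ω ∈ B i <;> simp [h, eventCount_eq_erase_add hi]

variable [MeasurableSpace Ω] {μ : Measure Ω}

lemma measurable_eventCount (hB : ∀ i, MeasurableSet (B i)) (s : Finset ι) :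
    Measurable (eventCount B s) :=
  Finset.measurable_sum s fun i _ => measurable_const.indicator (hB i)

lemma integrable_comp_eventCount [IsFiniteMeasure μ] (hB : ∀ i, MeasurableSet (B i))
    (s : Finset ι) (f : ℕ → ℝ) : Integrable (fun ω => f (eventCount B s ω)) μ := by
  refine .of_bound (measurable_from_nat.comp (measurable_eventCount hB s)).aestronglyMeasurable
    (∑ k ∈ range (s.card + 1), |f k|) (ae_of_all _ fun ω => ?_)
  exact Finset.single_le_sum (f := fun k => |f k|) (fun k _ => abs_nonneg _)
    (mem_range_succ_iff.2 (eventCount_le_card s ω))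

lemma indepFun_eventCount_indicator (hind : iIndepSet B μ) (hB : ∀ i, MeasurableSet (B i))
    {s : Finset ι} {i : ι} (hi : i ∉ s) :
    IndepFun (eventCount B s) ((B i).indicator 1 : Ω → ℕ) μ := by
  have h := (hind.iIndepFun_indicator (β := ℕ)).indepFun_finsetSum_of_notMem
    (fun j => measurable_const.indicator (hB j)) hi
  convert h using 1
  · ext ω
    simp [eventCount, Pi.one_def]
  · rfl

lemma setIntegral_comp_eventCount (hind : iIndepSet B μ) (hB : ∀ i, MeasurableSet (B i))
    {s : Finset ι} {i : ι} (hi : i ∉ s) (f : ℕ → ℝ) :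
    ∫ ω in B i, f (eventCount B s ω) ∂μ
      = μ.real (B i) * ∫ ω, f (eventCount B s ω) ∂μ := by
  have hmeas : Measurable ((B i).indicator 1 : Ω → ℕ) := measurable_const.indicator (hB i)
  refine Indep.setIntegral_eq_mul hmeas.comap_le
    ((IndepFun_iff_Indep _ _ _).1 (indepFun_eventCount_indicator hind hB hi).symm)
    (measurable_eventCount hB s).aemeasurable ⟨{1}, measurableSet_singleton 1, ?_⟩
    measurable_from_nat.aestronglyMeasurable
  ext ω
  by_cases h : ω ∈ B i <;> simp [h]

theorem integral_stein_operator_eventCount [IsFiniteMeasure μ] [Fintype ι] [DecidableEq ι]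
    (hind : iIndepSet B μ) (hB : ∀ i, MeasurableSet (B i)) (f : ℕ → ℝ) :
    ∫ ω, ((∑ i, μ.real (B i)) * f (eventCount B univ ω + 1)
        - eventCount B univ ω * f (eventCount B univ ω)) ∂μ
      = ∑ i, μ.real (B i) ^ 2 * ∫ ω, (f (eventCount B (univ.erase i) ω + 2)
          - f (eventCount B (univ.erase i) ω + 1)) ∂μ := by
  have hint := fun (s : Finset ι) (g : ℕ → ℝ) => integrable_comp_eventCount (μ := μ) hB s g
  have hsize : ∀ ω, (eventCount B univ ω : ℝ) * f (eventCount B univ ω)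
      = ∑ i, (B i).indicator (fun ω => f (eventCount B (univ.erase i) ω + 1)) ω := by
    intro ω
    rw [eventCount, Nat.cast_sum, sum_mul]
    exact sum_congr rfl fun i _ => indicator_mul_comp_eventCount (mem_univ i) f ω
  calc _ = ∑ i, μ.real (B i) * (∫ ω, f (eventCount B univ ω + 1) ∂μ
          - ∫ ω, f (eventCount B (univ.erase i) ω + 1) ∂μ) := by
        simp_rw [hsize]
        have hshift := fun i => (hint (univ.erase i) (fun k => f (k + 1))).indicator (hB i)
        rw [integral_sub ((hint univ (fun k => f (k + 1))).const_mul _)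
            (integrable_finsetSum _ fun i _ => hshift i),
          integral_const_mul, integral_finsetSum _ fun i _ => hshift i, sum_mul,
          ← sum_sub_distrib]
        refine sum_congr rfl fun i _ => ?_
        rw [integral_indicator (hB i), mul_sub,
          setIntegral_comp_eventCount hind hB (notMem_erase i univ) (fun k => f (k + 1))]
    _ = _ := by
        refine sum_congr rfl fun i _ => ?_
        rw [← integral_sub (hint univ (fun k => f (k + 1))) (hint _ (fun k => f (k + 1)))]
        simp_rw [comp_eventCount_sub_comp_erase (mem_univ i) (fun k => f (k + 1))]
        simp only [add_assoc, Nat.reduceAdd]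
        rw [integral_indicator (hB i), setIntegral_comp_eventCount hind hB (notMem_erase i univ)
          (fun k => f (k + 2) - f (k + 1)), sq, mul_assoc]

lemma mul_abs_integral_steinChen_succ_sub_le [IsProbabilityMeasure μ] {lam : ℝ} (hl : 0 ≤ lam)
    (A : Set ℕ) (X : Ω → ℕ) :
    lam * |∫ ω, (steinChen (X ω + 2) lam A - steinChen (X ω + 1) lam A) ∂μ| ≤ 1 := by
  have h := norm_integral_le_of_norm_le_const (μ := μ) (C := 1)
    (f := fun ω => lam * (steinChen (X ω + 2) lam A - steinChen (X ω + 1) lam A))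
    (ae_of_all _ fun ω => by
      rw [Real.norm_eq_abs, abs_mul, abs_of_nonneg hl]
      exact mul_abs_steinChen_succ_sub_le hl A (X ω))
  rwa [integral_const_mul, probReal_univ, mul_one, Real.norm_eq_abs, abs_mul,
    abs_of_nonneg hl] at h

theorem measureReal_eventCount_mem_sub_PoSet [IsProbabilityMeasure μ] [Fintype ι]
    [DecidableEq ι] (hind : iIndepSet B μ) (hB : ∀ i, MeasurableSet (B i)) (A : Set ℕ) :
    μ.real {ω | eventCount B univ ω ∈ A} - PoSet A (∑ i, μ.real (B i))
      = ∑ i, μ.real (B i) ^ 2 * ∫ ω,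
          (steinChen (eventCount B (univ.erase i) ω + 2) (∑ i, μ.real (B i)) A
            - steinChen (eventCount B (univ.erase i) ω + 1) (∑ i, μ.real (B i)) A) ∂μ := by
  rw [← integral_stein_operator_eventCount hind hB (steinChen · (∑ i, μ.real (B i)) A)]
  simp_rw [← indicator_sub_PoSet_eq]
  have hW : MeasurableSet (eventCount B univ ⁻¹' A) :=
    measurable_eventCount hB univ .of_discrete
  have hcomp : ∀ ω,
      A.indicator 1 (eventCount B univ ω) = (eventCount B univ ⁻¹' A).indicator 1 ω :=
    fun ω => (Set.indicator_comp_right (g := (1 : ℕ → ℝ)) (x := ω) (eventCount B univ)).symm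
  simp_rw [hcomp]
  rw [integral_sub ((integrable_const 1).indicator hW) (integrable_const _),
    integral_indicator_one hW, integral_const, probReal_univ, one_smul]
  rfl

end EventCount

lemma abs_sum_sq_mul_le_iSup {ι : Type*} [Fintype ι] {p x : ι → ℝ} (hp : ∀ i, 0 ≤ p i)
    (hx : ∀ i, (∑ j, p j) * |x i| ≤ 1) : |∑ i, p i ^ 2 * x i| ≤ ⨆ i, p i := by
  have hM : ∀ i, p i ≤ ⨆ i, p i := le_ciSup (Set.finite_range p).bddAbove
  rcases (sum_nonneg fun i _ => hp i).eq_or_lt with h0 | hpos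
  · have hp0 : ∀ i, p i = 0 := fun i =>
      (sum_eq_zero_iff_of_nonneg fun i _ => hp i).1 h0.symm i (mem_univ i)
    simp [hp0]
  refine le_of_mul_le_mul_left ?_ hpos
  calc (∑ j, p j) * |∑ i, p i ^ 2 * x i|
      ≤ ∑ i, p i ^ 2 * ((∑ j, p j) * |x i|) := by
        refine (mul_le_mul_of_nonneg_left (abs_sum_le_sum_abs _ _) hpos.le).trans_eq ?_
        rw [mul_sum]
        exact sum_congr rfl fun i _ => by rw [abs_mul, abs_of_nonneg (sq_nonneg _)]; ring
    _ ≤ ∑ i, p i * ⨆ i, p i := sum_le_sum fun i _ => by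
        nlinarith [hx i, hM i, hp i, mul_nonneg (hp i) (hp i)]
    _ = (∑ j, p j) * ⨆ i, p i := by rw [sum_mul]

end SteinChen

/-- Unconditional Stein-Chen bound: for mutually independent events B_0,...,B_n,
W = Σ_i 1_{B_i} and lam = Σ_i P(B_i), for every A ⊆ ℕ,
|P({W ∈ A}) - Po(A;lam)| ≤ max_i P(B_i). -/
theorem steinChen_unconditional
    {Ω : Type*} [MeasurableSpace Ω]
    (μ : Measure Ω) [IsProbabilityMeasure μ]
    (n : ℕ) (B : Fin (n + 1) → Set Ω) (hBmeas : ∀ i, MeasurableSet (B i))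
    (hBindep : ProbabilityTheory.iIndepSet B μ)
    (W : Ω → ℕ) (hW : W = fun ω => ∑ i, (B i).indicator (fun _ => (1 : ℕ)) ω)
    (lam : ℝ) (hlam : lam = ∑ i, (μ (B i)).toReal)
    (A : Set ℕ) :
    |(μ {ω | W ω ∈ A}).toReal - PoSet A lam| ≤ ⨆ i, (μ (B i)).toReal := by
  subst hW
  simp only [← measureReal_def] at hlam ⊢
  subst hlam
  change |μ.real {ω | SteinChen.eventCount B univ ω ∈ A} - _| ≤ _
  rw [SteinChen.measureReal_eventCount_mem_sub_PoSet hBindep hBmeas A]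
  exact SteinChen.abs_sum_sq_mul_le_iSup (fun i => measureReal_nonneg) fun i =>
    SteinChen.mul_abs_integral_steinChen_succ_sub_le (sum_nonneg fun i _ => measureReal_nonneg) A _
end
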